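/- arXiv:2504.08622 — 6 statements merged into one kernel-verified Lean document; each statement's English description precedes it below -/
import Mathlib

section
/- Let V be a finite set and let P ∈ ℝ^{V×V} be a row-stochastic matrix (all entries nonnegative, each row summing to 1). Let S ⊆ V be nonempty and globally reachable, i.e., for every i ∈ V\S there exist m ≥ 1 and nodes i = v_0, v_1, …, v_m with P_{v_{h-1} v_h} > 0 for all h = 1,…,m and v_m ∈ S. Then the principal submatrix A = P_{RR} with R = V\S is Schur stable, i.e., its spectral radius satisfies ρ(A) < 1. -/
open Matrix

/-- If `P` is a row-stochastic matrix on a finite set `V` and `S ⊆ V` is a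
nonempty, globally reachable set of nodes, then the principal submatrix `A = P_{RR}`
with `R = V \ S` is Schur stable: its spectral radius (the largest modulus of a complex
eigenvalue) is strictly less than 1. -/
theorem schur_stability_of_globally_reachable
    {V : Type*} [Fintype V] [DecidableEq V]
    (P : Matrix V V ℝ)
    (hP_nonneg : ∀ i j, 0 ≤ P i j)
    (hP_rowsum : ∀ i, ∑ j, P i j = 1)
    (S : Finset V) (hS_nonempty : S.Nonempty)
    (hS_reach : ∀ i : V, i ∉ S → ∃ m : ℕ, 1 ≤ m ∧ ∃ v : Fin (m + 1) → V,
        v 0 = i ∧ v (Fin.last m) ∈ S ∧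
        ∀ h : Fin m, 0 < P (v h.castSucc) (v h.succ))
    (A : Matrix {i : V // i ∉ S} {i : V // i ∉ S} ℝ)
    (hA : A = P.submatrix Subtype.val Subtype.val) :
    spectralRadius ℂ (A.map Complex.ofReal) < 1 := by
  classical
  subst hA
  set R := {i : V // i ∉ S} with hRdef
  set A : Matrix R R ℝ := P.submatrix Subtype.val Subtype.val with hA
  -- trivial case: R empty
  by_cases hR : Nonempty R
  swap
  · rw [not_nonempty_iff] at hR
    have hspec : spectrum ℂ (A.map Complex.ofReal) = ∅ := by
      ext μ
      simp only [Set.mem_empty_iff_false, iff_false, spectrum.mem_iff, not_not]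
      haveI : Subsingleton (Matrix R R ℂ) :=
        ⟨fun a b => Matrix.ext fun i _ => isEmptyElim i⟩
      exact isUnit_of_subsingleton _
    rw [spectralRadius, hspec]
    simp
  -- A is entrywise nonneg
  have hA_nonneg : ∀ i j : R, 0 ≤ A i j := fun i j => hP_nonneg i.1 j.1
  -- row sums of A are ≤ 1
  have hrow : ∀ i : R, ∑ j, A i j ≤ 1 := by
    intro i
    have h1 : ∑ j : R, A i j = ∑ j ∈ Sᶜ, P i.1 j := by
      rw [Finset.sum_subtype Sᶜ (fun x => Finset.mem_compl)]
      rfl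
    rw [h1, ← hP_rowsum i.1]
    exact Finset.sum_le_sum_of_subset_of_nonneg (Finset.subset_univ _)
      (fun j _ _ => hP_nonneg i.1 j)
  -- stronger: row sum plus one missing S-entry is ≤ 1
  have hrow' : ∀ (i : R) (w : V), w ∈ S → ∑ j : R, A i j + P i.1 w ≤ 1 := by
    intro i w hw
    have h1 : ∑ j : R, A i j = ∑ j ∈ Sᶜ, P i.1 j := by
      rw [Finset.sum_subtype Sᶜ (fun x => Finset.mem_compl)]
      rfl
    have hwc : w ∉ Sᶜ := by simp [hw]
    rw [h1, add_comm, ← Finset.sum_insert hwc, ← hP_rowsum i.1]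
    exact Finset.sum_le_sum_of_subset_of_nonneg (Finset.subset_univ _)
      (fun j _ _ => hP_nonneg i.1 j)
  -- powers are nonneg
  have hpow_nonneg : ∀ (n : ℕ) (i j : R), 0 ≤ (A ^ n) i j := by
    intro n
    induction n with
    | zero => intro i j; rw [pow_zero]; by_cases hij : i = j <;> simp [one_apply, hij]
    | succ n ih =>
        intro i j
        rw [pow_succ, mul_apply]
        exact Finset.sum_nonneg fun k _ => mul_nonneg (ih i k) (hA_nonneg k j)
  set u : ℕ → R → ℝ := fun n i => ∑ j, (A ^ n) i j with hu
  have hu0 : ∀ i, u 0 i = 1 := by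
    intro i; simp [hu, one_apply]
    convert (Finset.sum_ite_eq Finset.univ i (fun _ => (1:ℝ))).trans (by simp : (if i ∈ (Finset.univ : Finset R) then (1:ℝ) else 0) = 1)
  have hu1 : ∀ i, u 1 i = ∑ j, A i j := by intro i; simp [hu]
  have hrec : ∀ (n : ℕ) (i : R), u (n + 1) i = ∑ k, A i k * u n k := by
    intro n i
    simp only [hu]
    rw [pow_succ']
    simp_rw [mul_apply, Finset.mul_sum]
    rw [Finset.sum_comm]
  have hu_nonneg : ∀ n i, 0 ≤ u n i := fun n i =>
    Finset.sum_nonneg fun j _ => hpow_nonneg n i j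
  have hu_le_one : ∀ n i, u n i ≤ 1 := by
    intro n
    induction n with
    | zero => intro i; rw [hu0]
    | succ n ih =>
        intro i
        rw [hrec]
        calc ∑ k, A i k * u n k ≤ ∑ k, A i k * 1 :=
              Finset.sum_le_sum fun k _ => mul_le_mul_of_nonneg_left (ih k) (hA_nonneg i k)
          _ = ∑ k, A i k := by simp
          _ ≤ 1 := hrow i
  have hu_anti : ∀ n i, u (n + 1) i ≤ u n i := by
    intro n
    induction n with
    | zero => intro i; rw [hu0]; exact hu_le_one 1 i
    | succ n ih =>
        intro i
        rw [hrec, hrec]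
        exact Finset.sum_le_sum fun k _ =>
          mul_le_mul_of_nonneg_left (ih k) (hA_nonneg i k)
  have hu_mono : ∀ {n m : ℕ}, n ≤ m → ∀ i, u m i ≤ u n i := by
    intro n m hnm
    induction m, hnm using Nat.le_induction with
    | base => intro i; exact le_rfl
    | succ m hm ih => intro i; exact (hu_anti m i).trans (ih i)
  -- key path lemma
  have key : ∀ m : ℕ, 1 ≤ m → ∀ (w : ℕ → V) (i : V) (hi : i ∉ S), w 0 = i → w m ∈ S →
      (∀ k, k < m → 0 < P (w k) (w (k + 1))) → u m ⟨i, hi⟩ < 1 := by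
    intro m
    induction m using Nat.strong_induction_on with
    | _ m IH =>
      intro hm w i hi hw0 hwm hpos
      by_cases hw1 : w 1 ∈ S
      · -- u 1 < 1, then monotone
        have h1 : u 1 ⟨i, hi⟩ < 1 := by
          rw [hu1]
          have := hrow' ⟨i, hi⟩ (w 1) hw1
          have hp : 0 < P i (w 1) := hw0 ▸ hpos 0 hm
          linarith
        exact lt_of_le_of_lt (hu_mono hm ⟨i, hi⟩) h1
      · -- w 1 ∉ S, so m ≥ 2, use induction
        have hm2 : 2 ≤ m := by
          rcases Nat.lt_or_ge m 2 with h | h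
          · interval_cases m
            · exact absurd hwm hw1
          · exact h
        obtain ⟨m', rfl⟩ : ∃ m', m = m' + 1 := ⟨m - 1, by omega⟩
        have hIH : u m' ⟨w 1, hw1⟩ < 1 := by
          refine IH m' (by omega) (by omega) (fun k => w (k + 1)) (w 1) hw1 rfl ?_ ?_
          · exact hwm
          · intro k hk; exact hpos (k + 1) (by omega)
        have hAij : 0 < A ⟨i, hi⟩ ⟨w 1, hw1⟩ := by
          have := hpos 0 (by omega)
          rw [hw0] at this
          exact this
        rw [hrec]
        calc ∑ k, A ⟨i, hi⟩ k * u m' k < ∑ k, A ⟨i, hi⟩ k * 1 := by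
              refine Finset.sum_lt_sum (fun k _ =>
                mul_le_mul_of_nonneg_left (hu_le_one m' k) (hA_nonneg _ k))
                ⟨⟨w 1, hw1⟩, Finset.mem_univ _, ?_⟩
              exact mul_lt_mul_of_pos_left hIH hAij
          _ = ∑ k, A ⟨i, hi⟩ k := by simp
          _ ≤ 1 := hrow ⟨i, hi⟩
  -- choose a uniform power N
  have hex : ∀ i : R, ∃ n : ℕ, u n i < 1 := by
    intro i
    obtain ⟨m, hm, v, hv0, hvm, hvpos⟩ := hS_reach i.1 i.2
    refine ⟨m, key m hm (fun k => v ⟨min k m, by omega⟩) i.1 i.2 ?_ ?_ ?_⟩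
    · simpa using hv0
    · simp only [min_self]; exact hvm
    · intro k hk
      have h1 : min k m = k := by omega
      have h2 : min (k + 1) m = k + 1 := by omega
      simp only [h1, h2]
      exact hvpos ⟨k, hk⟩
  choose f hf using hex
  set N : ℕ := Finset.univ.sup f with hN
  have huN : ∀ i : R, u N i < 1 := fun i =>
    lt_of_le_of_lt (hu_mono (Finset.le_sup (Finset.mem_univ i)) i) (hf i)
  have hNpos : 1 ≤ N := by
    obtain ⟨i⟩ := hR
    by_contra h
    have hN0 : N = 0 := by omega
    have h2 := huN i
    rw [hN0, hu0] at h2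
    exact lt_irrefl 1 h2
  -- uniform bound c
  set c : ℝ := Finset.univ.sup' (Finset.univ_nonempty) (u N) with hc
  have hc_lt : c < 1 := by
    rw [hc, Finset.sup'_lt_iff]
    exact fun i _ => huN i
  have hc_nonneg : 0 ≤ c := by
    obtain ⟨i⟩ := hR
    exact (hu_nonneg N i).trans (Finset.le_sup' (u N) (Finset.mem_univ i))
  -- every spectral value μ satisfies ‖μ‖ ^ N ≤ c
  have hbound : ∀ μ ∈ spectrum ℂ (A.map Complex.ofReal), ‖μ‖ ^ N ≤ c := by
    intro μ hμ
    set M : Matrix R R ℂ := A.map Complex.ofReal with hM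
    rw [spectrum.mem_iff, Matrix.isUnit_iff_isUnit_det, isUnit_iff_ne_zero, not_not] at hμ
    obtain ⟨x, hx, hMx⟩ := (Matrix.exists_mulVec_eq_zero_iff).2 hμ
    rw [Matrix.sub_mulVec] at hMx
    have h2 : (algebraMap ℂ (Matrix R R ℂ)) μ *ᵥ x = μ • x := by
      ext i; simp [Matrix.algebraMap_eq_diagonal, Matrix.mulVec_diagonal, Pi.algebraMap_apply]
    rw [h2, sub_eq_zero] at hMx
    -- hMx : μ • x = M *ᵥ x
    have hpowvec : ∀ n : ℕ, (M ^ n) *ᵥ x = μ ^ n • x := by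
      intro n
      induction n with
      | zero => simp
      | succ n ih =>
          rw [pow_succ', pow_succ', ← Matrix.mulVec_mulVec, ih, Matrix.mulVec_smul,
            ← hMx, smul_smul, mul_comm]
    have hMpow : ∀ n : ℕ, M ^ n = (A ^ n).map Complex.ofReal := by
      intro n
      have : M = Complex.ofRealHom.mapMatrix A := rfl
      rw [this, ← map_pow]
      rfl
    obtain ⟨i0, _, hi0⟩ := Finset.exists_max_image Finset.univ (fun i => ‖x i‖)
      ⟨hR.some, Finset.mem_univ _⟩
    have hxi0 : 0 < ‖x i0‖ := by
      obtain ⟨j, hj⟩ := Function.ne_iff.1 hx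
      exact lt_of_lt_of_le (norm_pos_iff.2 hj) (hi0 j (Finset.mem_univ j))
    have hkey : ‖μ‖ ^ N * ‖x i0‖ ≤ c * ‖x i0‖ := by
      have h1 : (μ ^ N • x) i0 = ((M ^ N) *ᵥ x) i0 := by rw [hpowvec]
      have h2 : ‖(μ ^ N • x) i0‖ = ‖μ‖ ^ N * ‖x i0‖ := by
        simp [norm_smul]
      rw [← h2, h1]
      have h3 : ((M ^ N) *ᵥ x) i0 = ∑ j, ((A ^ N) i0 j : ℂ) * x j := by
        rw [hMpow, Matrix.mulVec]
        simp [dotProduct, Matrix.map_apply]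
      rw [h3]
      calc ‖∑ j, ((A ^ N) i0 j : ℂ) * x j‖ ≤ ∑ j, ‖((A ^ N) i0 j : ℂ) * x j‖ :=
            norm_sum_le _ _
        _ = ∑ j, (A ^ N) i0 j * ‖x j‖ := by
            refine Finset.sum_congr rfl fun j _ => ?_
            rw [norm_mul, Complex.norm_real, Real.norm_of_nonneg (hpow_nonneg N i0 j)]
        _ ≤ ∑ j, (A ^ N) i0 j * ‖x i0‖ :=
            Finset.sum_le_sum fun j _ =>
              mul_le_mul_of_nonneg_left (hi0 j (Finset.mem_univ j)) (hpow_nonneg N i0 j)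
        _ = u N i0 * ‖x i0‖ := by rw [← Finset.sum_mul]
        _ ≤ c * ‖x i0‖ :=
            mul_le_mul_of_nonneg_right (Finset.le_sup' (u N) (Finset.mem_univ i0))
              (norm_nonneg _)
    exact le_of_mul_le_mul_right hkey hxi0
  -- conclude
  set t : ℝ := c ^ ((N : ℝ)⁻¹) with ht
  have ht_lt : t < 1 := by
    rcases eq_or_lt_of_le hc_nonneg with h | h
    · rw [ht, ← h, Real.zero_rpow (by positivity)]; norm_num
    · exact Real.rpow_lt_one hc_nonneg hc_lt (by positivity)
  have hμt : ∀ μ ∈ spectrum ℂ (A.map Complex.ofReal), ‖μ‖ ≤ t := by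
    intro μ hμ
    have h1 : ‖μ‖ = (‖μ‖ ^ N) ^ ((N : ℝ)⁻¹) := by
      rw [← Real.rpow_natCast ‖μ‖ N, ← Real.rpow_mul (norm_nonneg _)]
      rw [mul_inv_cancel₀ (by positivity), Real.rpow_one]
    rw [h1, ht]
    exact Real.rpow_le_rpow (by positivity) (hbound μ hμ) (by positivity)
  have ht_nonneg : 0 ≤ t := Real.rpow_nonneg hc_nonneg _
  rw [spectralRadius]
  refine lt_of_le_of_lt (iSup₂_le fun μ hμ => ?_) (?_ : ENNReal.ofReal t < 1)
  · rw [show ((‖μ‖₊ : NNReal) : ENNReal) = ENNReal.ofReal ‖μ‖ from (ofReal_norm μ).symm]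
    exact ENNReal.ofReal_le_ofReal (hμt μ hμ)
  · rw [ENNReal.ofReal_lt_one]
    exact ht_lt
end

section
/- Let R be a finite set and H ∈ ℝ^{R×R} symmetric positive definite with H_{ij} ≤ 0 for all i ≠ j. Define G : 2^R → ℝ by G(K) = 1_{-K}ᵀ (H_{-K,-K})^{-1} 1_{-K} for K ⊊ R and G(R) = 0, where 1 is the all-ones vector and −K denotes R \ K. Then G is supermodular: for all A ⊆ B ⊆ R and k ∈ R \ B, G(A ∪ {k}) − G(A) ≤ G(B ∪ {k}) − G(B). -/
open Matrix

/-- The principal submatrix of `M` with rows and columns in the finite subset `K`. -/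
def Matrix.principalSub {R : Type*} [Fintype R] [DecidableEq R]
    (M : Matrix R R ℝ) (K : Finset R) : Matrix ↥K ↥K ℝ :=
  M.submatrix Subtype.val Subtype.val

namespace MseSupermodularAux

variable {R : Type*} [Fintype R] [DecidableEq R]

/-- The quadratic-type quantity `u|_Tᵀ (H_T)⁻¹ v|_T`. -/
noncomputable def dotQ (H : Matrix R R ℝ) (T : Finset R) (u v : R → ℝ) : ℝ :=
  (fun i : ↥T => u i) ⬝ᵥ (H.principalSub T)⁻¹ *ᵥ (fun i : ↥T => v i)

lemma sum_insert_subtype {T : Finset R} {k : R} (hk : k ∉ T) (f : ↥(insert k T) → ℝ) :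
    ∑ i : ↥(insert k T), f i
      = f ⟨k, Finset.mem_insert_self k T⟩
        + ∑ i : ↥T, f ⟨i.1, Finset.mem_insert_of_mem i.2⟩ := by
  have hnm : (⟨k, Finset.mem_insert_self k T⟩ : ↥(insert k T)) ∉
      T.attach.image (fun x : ↥T => (⟨x.1, Finset.mem_insert_of_mem x.2⟩ : ↥(insert k T))) := by
    simp only [Finset.mem_image]
    rintro ⟨x, -, hx⟩
    apply hk
    have : (x : R) = k := congrArg Subtype.val hx
    rw [← this]
    exact x.2
  rw [Finset.sum_coe_sort_eq_attach, Finset.attach_insert, Finset.sum_insert hnm,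
      Finset.sum_image (by intro x _ y _ h; injection h with h'; exact Subtype.ext h')]
  rfl

/-- Glue a value at `k` and a vector on `T` into a vector on `insert k T`. -/
noncomputable def glue (T : Finset R) (k : R) (a : ℝ) (y : ↥T → ℝ) : ↥(insert k T) → ℝ :=
  fun i => if h : (i : R) ∈ T then y ⟨i, h⟩ else a

lemma glue_k {T : Finset R} {k : R} (hk : k ∉ T) (a : ℝ) (y : ↥T → ℝ) :
    glue T k a y ⟨k, Finset.mem_insert_self k T⟩ = a := dif_neg hk

lemma glue_mem {T : Finset R} {k : R} (a : ℝ) (y : ↥T → ℝ) (j : ↥T) :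
    glue T k a y ⟨j.1, Finset.mem_insert_of_mem j.2⟩ = y j := by
  simp [glue, j.2]

lemma principalSub_posDef {H : Matrix R R ℝ} (hH : H.PosDef) (T : Finset R) :
    (H.principalSub T).PosDef := by
  refine Matrix.PosDef.of_dotProduct_mulVec_pos (hH.1.submatrix _) ?_
  intro x hx
  classical
  set y : R → ℝ := fun j => if h : j ∈ T then x ⟨j, h⟩ else 0 with hy
  have hyne : y ≠ 0 := by
    obtain ⟨i, hi⟩ := Function.ne_iff.mp hx
    intro h0
    apply hi
    have : y i.1 = 0 := congrFun h0 i.1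
    simpa [hy, i.2] using this
  have hsum : ∀ g : R → ℝ, ∑ j : R, y j * g j = ∑ j : ↥T, x j * g j.1 := by
    intro g
    rw [← Finset.sum_subset (Finset.subset_univ T)
        (by intro j _ hj; simp [hy, hj])]
    rw [← Finset.sum_coe_sort T (fun j => y j * g j)]
    exact Finset.sum_congr rfl fun j _ => by simp [hy, j.2]
  have key : star y ⬝ᵥ H *ᵥ y = star x ⬝ᵥ (H.principalSub T) *ᵥ x := by
    rw [show star y = y from funext fun _ => star_trivial _,
        show star x = x from funext fun _ => star_trivial _]
    show ∑ j : R, y j * (H *ᵥ y) j = ∑ j : ↥T, x j * ((H.principalSub T) *ᵥ x) j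
    rw [hsum (fun j => (H *ᵥ y) j)]
    refine Finset.sum_congr rfl fun j _ => ?_
    congr 1
    show ∑ m : R, H j.1 m * y m = ∑ m : ↥T, H j.1 m.1 * x m
    calc ∑ m : R, H j.1 m * y m = ∑ m : R, y m * H j.1 m := by
          exact Finset.sum_congr rfl fun m _ => mul_comm _ _
      _ = ∑ m : ↥T, x m * H j.1 m.1 := hsum (fun m => H j.1 m)
      _ = ∑ m : ↥T, H j.1 m.1 * x m := Finset.sum_congr rfl fun m _ => mul_comm _ _
  have := hH.dotProduct_mulVec_pos hyne
  rw [key] at this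
  exact this

lemma psub_mul_inv {H : Matrix R R ℝ} (hH : H.PosDef) (T : Finset R) :
    H.principalSub T * (H.principalSub T)⁻¹ = 1 :=
  Matrix.mul_nonsing_inv _ (isUnit_iff_ne_zero.mpr (principalSub_posDef hH T).det_pos.ne')

lemma psub_inv_mul {H : Matrix R R ℝ} (hH : H.PosDef) (T : Finset R) :
    (H.principalSub T)⁻¹ * H.principalSub T = 1 :=
  Matrix.nonsing_inv_mul _ (isUnit_iff_ne_zero.mpr (principalSub_posDef hH T).det_pos.ne')

lemma inv_symm_dot {H : Matrix R R ℝ} (hH : H.PosDef) (T : Finset R) (p q : ↥T → ℝ) :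
    p ⬝ᵥ (H.principalSub T)⁻¹ *ᵥ q = q ⬝ᵥ (H.principalSub T)⁻¹ *ᵥ p := by
  have hA : ((H.principalSub T)⁻¹)ᵀ = (H.principalSub T)⁻¹ :=
    ((principalSub_posDef hH T).1.inv : Matrix.IsHermitian _)
  rw [Matrix.dotProduct_mulVec, ← Matrix.mulVec_transpose, hA, dotProduct_comm]

/-- The one-step Schur complement identity, together with positivity of the
Schur complement. -/
lemma schur_core {H : Matrix R R ℝ} (hH : H.PosDef) {T : Finset R} {k : R} (hk : k ∉ T) :
    0 < H k k - dotQ H T (fun i => H i k) (fun i => H i k) ∧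
    ∀ u v : R → ℝ, dotQ H (insert k T) u v
      = dotQ H T u v
        + (u k - dotQ H T (fun i => H i k) u) * (v k - dotQ H T (fun i => H i k) v)
          / (H k k - dotQ H T (fun i => H i k) (fun i => H i k)) := by
  classical
  have hsymm : ∀ i j : R, H i j = H j i := fun i j => by
    simpa using hH.1.apply j i
  set A : Matrix ↥T ↥T ℝ := (H.principalSub T)⁻¹ with hA
  set c : ↥T → ℝ := fun i => H i.1 k with hc
  set w : ↥T → ℝ := A *ᵥ c with hw
  set s : ℝ := H k k - c ⬝ᵥ w with hs
  have hdq : dotQ H T (fun i => H i k) (fun i => H i k) = c ⬝ᵥ w := rfl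
  have hrow_k : ∀ z : ↥T → ℝ, ∑ j : ↥T, H k j.1 * z j = c ⬝ᵥ z := by
    intro z
    exact Finset.sum_congr rfl fun j _ => by rw [hsymm k j.1]
  have hrow_T : ∀ (i : ↥T) (z : ↥T → ℝ), ∑ j : ↥T, H i.1 j.1 * z j
      = ((H.principalSub T) *ᵥ z) i := fun _ _ => rfl
  have hTw : H.principalSub T *ᵥ w = c := by
    rw [hw, Matrix.mulVec_mulVec, psub_mul_inv hH, Matrix.one_mulVec]
  -- entrywise formula for `H_S *ᵥ glue a y`
  have hmv : ∀ (a : ℝ) (y : ↥T → ℝ) (i : ↥(insert k T)),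
      ((H.principalSub (insert k T)) *ᵥ glue T k a y) i
        = H i.1 k * a + ∑ j : ↥T, H i.1 j.1 * y j := by
    intro a y i
    show ∑ m : ↥(insert k T), H i.1 m.1 * glue T k a y m = _
    rw [sum_insert_subtype hk (fun m => H i.1 m.1 * glue T k a y m)]
    simp only [glue_k hk, glue_mem]
  -- the special vector for the Schur complement
  have hx1 : (H.principalSub (insert k T)) *ᵥ glue T k 1 (-w) = glue T k s 0 := by
    funext i
    rw [hmv]
    rcases Finset.mem_insert.1 i.2 with h | h
    · have hgi : glue T k s 0 i = s := by
        have : i = ⟨k, Finset.mem_insert_self k T⟩ := Subtype.ext h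
        rw [this, glue_k hk]
      rw [hgi, h]
      have : ∑ j : ↥T, H k j.1 * (-w) j = -(c ⬝ᵥ w) := by
        rw [hrow_k]; exact dotProduct_neg c w
      rw [this, hs]; ring
    · have hgi : glue T k s 0 i = 0 := by
        have : i = ⟨(⟨i.1, h⟩ : ↥T).1,
            Finset.mem_insert_of_mem (⟨i.1, h⟩ : ↥T).2⟩ := Subtype.ext rfl
        rw [this, glue_mem]; rfl
      rw [hgi, hrow_T ⟨i.1, h⟩]
      rw [Matrix.mulVec_neg, Pi.neg_apply, hTw]
      show H i.1 k * 1 + -(H i.1 k) = 0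
      ring
  have hspos : 0 < s := by
    have hne : glue T k 1 (-w) ≠ 0 := by
      intro h0
      have := congrFun h0 ⟨k, Finset.mem_insert_self k T⟩
      rw [glue_k hk] at this
      exact one_ne_zero this
    have hpos := (principalSub_posDef hH (insert k T)).dotProduct_mulVec_pos hne
    rw [show star (glue T k 1 (-w)) = glue T k 1 (-w) from funext fun _ => star_trivial _,
        hx1] at hpos
    have : glue T k 1 (-w) ⬝ᵥ glue T k s 0 = s := by
      show ∑ i : ↥(insert k T), glue T k 1 (-w) i * glue T k s 0 i = s
      rw [sum_insert_subtype hk, glue_k hk, glue_k hk]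
      simp [glue_mem]
    rwa [this] at hpos
  refine ⟨by rw [hdq]; exact hspos, ?_⟩
  intro u v
  have hsne : s ≠ 0 := hspos.ne'
  set vT : ↥T → ℝ := fun i => v i.1 with hvT
  set uT : ↥T → ℝ := fun i => u i.1 with huT
  set β : ℝ := (v k - c ⬝ᵥ (A *ᵥ vT)) / s with hβ
  set x : ↥(insert k T) → ℝ := glue T k β (A *ᵥ vT - β • w) with hxdef
  have hHx : (H.principalSub (insert k T)) *ᵥ x = fun i : ↥(insert k T) => v i.1 := by
    funext i
    rw [hxdef, hmv]
    rcases Finset.mem_insert.1 i.2 with h | h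
    · rw [h]
      have h2 : ∑ j : ↥T, H k j.1 * (A *ᵥ vT - β • w) j = c ⬝ᵥ (A *ᵥ vT) - β * (c ⬝ᵥ w) := by
        rw [hrow_k, dotProduct_sub, dotProduct_smul]
        rfl
      rw [h2]
      have hβs : β * s = v k - c ⬝ᵥ (A *ᵥ vT) := by
        rw [hβ]; field_simp
      rw [hs] at hβs
      nlinarith [hβs]
    · have h2 : ∑ j : ↥T, H i.1 j.1 * (A *ᵥ vT - β • w) j
          = vT ⟨i.1, h⟩ - β * c ⟨i.1, h⟩ := by
        rw [hrow_T ⟨i.1, h⟩, Matrix.mulVec_sub, Matrix.mulVec_smul, Pi.sub_apply,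
            Pi.smul_apply, Matrix.mulVec_mulVec, psub_mul_inv hH, Matrix.one_mulVec, hTw]
        rfl
      rw [h2]
      show H i.1 k * β + (vT ⟨i.1, h⟩ - β * c ⟨i.1, h⟩) = v i.1
      have : c ⟨i.1, h⟩ = H i.1 k := rfl
      rw [this, hvT]
      ring
  have hAx : (H.principalSub (insert k T))⁻¹ *ᵥ (fun i : ↥(insert k T) => v i.1) = x := by
    rw [← hHx, Matrix.mulVec_mulVec, psub_inv_mul hH, Matrix.one_mulVec]
  have hdot : dotQ H (insert k T) u v = u k * β + uT ⬝ᵥ (A *ᵥ vT - β • w) := by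
    show (fun i : ↥(insert k T) => u i.1) ⬝ᵥ _ *ᵥ _ = _
    rw [hAx]
    show ∑ i : ↥(insert k T), u i.1 * x i = _
    rw [sum_insert_subtype hk]
    rw [hxdef]
    simp only [glue_k hk, glue_mem]
    rfl
  rw [hdot, dotProduct_sub, dotProduct_smul]
  have huw : uT ⬝ᵥ w = c ⬝ᵥ (A *ᵥ uT) := by
    rw [hw]; exact inv_symm_dot hH T uT c
  have h1 : dotQ H T u v = uT ⬝ᵥ (A *ᵥ vT) := rfl
  have h2 : dotQ H T (fun i => H i k) u = c ⬝ᵥ (A *ᵥ uT) := rfl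
  have h3 : dotQ H T (fun i => H i k) v = c ⬝ᵥ (A *ᵥ vT) := rfl
  rw [h1, h2, h3, hdq, huw, hβ, ← hs]
  have : (s : ℝ) ≠ 0 := hsne
  field_simp
  linear_combination (c ⬝ᵥ (A *ᵥ vT) * c ⬝ᵥ (A *ᵥ uT) - v k * c ⬝ᵥ (A *ᵥ uT)) * mul_inv_cancel₀ this

lemma dotQ_neg_left (H : Matrix R R ℝ) (T : Finset R) (u v : R → ℝ) :
    dotQ H T (fun i => -u i) v = -(dotQ H T u v) := by
  show (-(fun i : ↥T => u i.1)) ⬝ᵥ _ = _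
  rw [neg_dotProduct]
  rfl

lemma dotQ_neg_right (H : Matrix R R ℝ) (T : Finset R) (u v : R → ℝ) :
    dotQ H T u (fun i => -v i) = -(dotQ H T u v) := by
  show _ ⬝ᵥ _ *ᵥ (-(fun i : ↥T => v i.1)) = _
  rw [Matrix.mulVec_neg, dotProduct_neg]
  rfl

lemma dotQ_empty (H : Matrix R R ℝ) (u v : R → ℝ) : dotQ H ∅ u v = 0 := by
  simp [dotQ, dotProduct]

lemma dotQ_nonneg {H : Matrix R R ℝ} (hH : H.PosDef)
    (hoff : ∀ i j : R, i ≠ j → H i j ≤ 0) :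
    ∀ T : Finset R, ∀ u v : R → ℝ,
      (∀ i ∈ T, 0 ≤ u i) → (∀ i ∈ T, 0 ≤ v i) → 0 ≤ dotQ H T u v := by
  intro T
  induction T using Finset.strongInduction with
  | _ T ih =>
    intro u v hu hv
    rcases T.eq_empty_or_nonempty with rfl | ⟨k, hk⟩
    · rw [dotQ_empty]
    · have hkT : k ∉ T.erase k := Finset.notMem_erase k T
      have hss : T.erase k ⊂ T := Finset.erase_ssubset hk
      obtain ⟨hs, hid⟩ := schur_core hH hkT
      have hrw : dotQ H T u v = dotQ H (insert k (T.erase k)) u v := by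
        rw [Finset.insert_erase hk]
      rw [hrw, hid u v]
      have hmem : ∀ i ∈ T.erase k, i ∈ T := fun i hi => Finset.mem_of_mem_erase hi
      have hcu : dotQ H (T.erase k) (fun i => H i k) u ≤ 0 := by
        have := ih (T.erase k) hss (fun i => -H i k) u
          (fun i hi => neg_nonneg.2 (hoff i k (Finset.ne_of_mem_erase hi)))
          (fun i hi => hu i (hmem i hi))
        rw [dotQ_neg_left] at this
        linarith
      have hcv : dotQ H (T.erase k) (fun i => H i k) v ≤ 0 := by
        have := ih (T.erase k) hss (fun i => -H i k) v
          (fun i hi => neg_nonneg.2 (hoff i k (Finset.ne_of_mem_erase hi)))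
          (fun i hi => hv i (hmem i hi))
        rw [dotQ_neg_left] at this
        linarith
      have h0 : 0 ≤ dotQ H (T.erase k) u v :=
        ih (T.erase k) hss u v (fun i hi => hu i (hmem i hi)) (fun i hi => hv i (hmem i hi))
      have hu' : 0 ≤ u k - dotQ H (T.erase k) (fun i => H i k) u := by
        have := hu k hk; linarith
      have hv' : 0 ≤ v k - dotQ H (T.erase k) (fun i => H i k) v := by
        have := hv k hk; linarith
      have := div_nonneg (mul_nonneg hu' hv') hs.le
      linarith

lemma dotQ_mono {H : Matrix R R ℝ} (hH : H.PosDef)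
    (hoff : ∀ i j : R, i ≠ j → H i j ≤ 0) :
    ∀ T : Finset R, ∀ T' ⊆ T, ∀ u v : R → ℝ,
      (∀ i ∈ T, 0 ≤ u i) → (∀ i ∈ T, 0 ≤ v i) → dotQ H T' u v ≤ dotQ H T u v := by
  intro T
  induction T using Finset.strongInduction with
  | _ T ih =>
    intro T' hsub u v hu hv
    rcases hsub.eq_or_ssubset with rfl | hss
    · exact le_rfl
    · obtain ⟨k, hkT, hkT'⟩ := Finset.exists_of_ssubset hss
      have h1 : T' ⊆ T.erase k := fun i hi =>
        Finset.mem_erase.2 ⟨fun h => hkT' (h ▸ hi), hsub hi⟩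
      have hssT : T.erase k ⊂ T := Finset.erase_ssubset hkT
      have hmem : ∀ i ∈ T.erase k, i ∈ T := fun i hi => Finset.mem_of_mem_erase hi
      have step1 : dotQ H T' u v ≤ dotQ H (T.erase k) u v :=
        ih (T.erase k) hssT T' h1 u v (fun i hi => hu i (hmem i hi))
          (fun i hi => hv i (hmem i hi))
      have step2 : dotQ H (T.erase k) u v ≤ dotQ H T u v := by
        obtain ⟨hs, hid⟩ := schur_core hH (Finset.notMem_erase k T)
        have hrw : dotQ H T u v = dotQ H (insert k (T.erase k)) u v := by
          rw [Finset.insert_erase hkT]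
        rw [hrw, hid u v]
        have hcu : dotQ H (T.erase k) (fun i => H i k) u ≤ 0 := by
          have := dotQ_nonneg hH hoff (T.erase k) (fun i => -H i k) u
            (fun i hi => neg_nonneg.2 (hoff i k (Finset.ne_of_mem_erase hi)))
            (fun i hi => hu i (hmem i hi))
          rw [dotQ_neg_left] at this
          linarith
        have hcv : dotQ H (T.erase k) (fun i => H i k) v ≤ 0 := by
          have := dotQ_nonneg hH hoff (T.erase k) (fun i => -H i k) v
            (fun i hi => neg_nonneg.2 (hoff i k (Finset.ne_of_mem_erase hi)))
            (fun i hi => hv i (hmem i hi))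
          rw [dotQ_neg_left] at this
          linarith
        have hu' : 0 ≤ u k - dotQ H (T.erase k) (fun i => H i k) u := by
          have := hu k hkT; linarith
        have hv' : 0 ≤ v k - dotQ H (T.erase k) (fun i => H i k) v := by
          have := hv k hkT; linarith
        have := div_nonneg (mul_nonneg hu' hv') hs.le
        linarith
      linarith

end MseSupermodularAux

open MseSupermodularAux in
/-- If `H` is symmetric positive definite with nonpositive off-diagonal
entries, then `G(K) = 1_{-K}ᵀ (H_{-K,-K})⁻¹ 1_{-K}` (with `G(R) = 0`, realized here as
an empty sum) is supermodular:
`G(A ∪ {k}) − G(A) ≤ G(B ∪ {k}) − G(B)` for all `A ⊆ B ⊆ R` and `k ∈ R \ B`. -/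
theorem mse_supermodular
    {R : Type*} [Fintype R] [DecidableEq R]
    (H : Matrix R R ℝ) (hH : H.PosDef)
    (hH_offdiag : ∀ i j : R, i ≠ j → H i j ≤ 0)
    (G : Finset R → ℝ)
    (hG : ∀ K : Finset R,
      G K = (fun _ : ↥(Kᶜ) => (1 : ℝ)) ⬝ᵥ
              (H.principalSub Kᶜ)⁻¹.mulVec (fun _ => (1 : ℝ))) :
    ∀ A B : Finset R, A ⊆ B → ∀ k ∉ B,
      G (insert k A) - G A ≤ G (insert k B) - G B := by
  intro A B hAB k hkB
  have hkA : k ∉ A := fun h => hkB (hAB h)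
  set one : R → ℝ := fun _ => 1 with hone
  have hGd : ∀ K : Finset R, G K = dotQ H Kᶜ one one := fun K => hG K
  set TA : Finset R := (insert k A)ᶜ with hTA
  set TB : Finset R := (insert k B)ᶜ with hTB
  have hkTA : k ∉ TA := by simp [hTA]
  have hkTB : k ∉ TB := by simp [hTB]
  have hTBA : TB ⊆ TA := by
    rw [hTA, hTB]
    exact Finset.compl_subset_compl.2 (Finset.insert_subset_insert k hAB)
  have hAeq : Aᶜ = insert k TA := by
    rw [hTA, Finset.compl_insert, Finset.insert_erase (Finset.mem_compl.2 hkA)]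
  have hBeq : Bᶜ = insert k TB := by
    rw [hTB, Finset.compl_insert, Finset.insert_erase (Finset.mem_compl.2 hkB)]
  obtain ⟨hsA, hidA⟩ := schur_core hH hkTA
  obtain ⟨hsB, hidB⟩ := schur_core hH hkTB
  -- rewrite via the `m = -c` vector
  set m : R → ℝ := fun i => -H i k with hm
  have hmTA : ∀ i ∈ TA, 0 ≤ m i := fun i hi =>
    neg_nonneg.2 (hH_offdiag i k (fun h => hkTA (h ▸ hi)))
  have hmTB : ∀ i ∈ TB, 0 ≤ m i := fun i hi => hmTA i (hTBA hi)
  have honeTA : ∀ i ∈ TA, (0:ℝ) ≤ one i := fun _ _ => zero_le_one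
  have hcm : ∀ T : Finset R, ∀ z : R → ℝ,
      dotQ H T (fun i => H i k) z = -(dotQ H T m z) := by
    intro T z
    rw [hm, dotQ_neg_left, neg_neg]
  have hcc : ∀ T : Finset R,
      dotQ H T (fun i => H i k) (fun i => H i k) = dotQ H T m m := by
    intro T
    rw [hm, dotQ_neg_left, dotQ_neg_right, neg_neg]
  -- the key quantities
  set NA : ℝ := 1 + dotQ H TA m one with hNA
  set NB : ℝ := 1 + dotQ H TB m one with hNB
  set sA : ℝ := H k k - dotQ H TA m m with hsA'
  set sB : ℝ := H k k - dotQ H TB m m with hsB'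
  have hsApos : 0 < sA := by rw [hsA']; rw [hcc TA] at hsA; exact hsA
  have hsBpos : 0 < sB := by rw [hsB']; rw [hcc TB] at hsB; exact hsB
  have hEA : G A = G (insert k A) + NA * NA / sA := by
    rw [hGd A, hGd (insert k A), hAeq]
    have h1 : dotQ H (insert k A)ᶜ one one = dotQ H TA one one := by rw [hTA]
    rw [hidA one one, h1, hcm TA one, hcc TA]
    rw [hNA, hsA']
    norm_num
  have hEB : G B = G (insert k B) + NB * NB / sB := by
    rw [hGd B, hGd (insert k B), hBeq]
    have h1 : dotQ H (insert k B)ᶜ one one = dotQ H TB one one := by rw [hTB]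
    rw [hidB one one, h1, hcm TB one, hcc TB]
    rw [hNB, hsB']
    norm_num
  -- monotonicity facts
  have hq1 : 0 ≤ dotQ H TB m one :=
    dotQ_nonneg hH hH_offdiag TB m one hmTB (fun _ _ => zero_le_one)
  have hq2 : dotQ H TB m one ≤ dotQ H TA m one :=
    dotQ_mono hH hH_offdiag TA TB hTBA m one hmTA honeTA
  have hq3 : dotQ H TB m m ≤ dotQ H TA m m :=
    dotQ_mono hH hH_offdiag TA TB hTBA m m hmTA hmTA
  have hNBpos : 0 < NB := by rw [hNB]; linarith
  have hNBA : NB ≤ NA := by rw [hNA, hNB]; linarith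
  have hsAB : sA ≤ sB := by rw [hsA', hsB']; linarith
  have hdiv : NB * NB / sB ≤ NA * NA / sA := by
    apply div_le_div₀ (by nlinarith) (by nlinarith) hsApos hsAB
  linarith [hEA, hEB, hdiv]
end

section
/- Let R be a finite set and C ∈ ℝ^{R×R} symmetric positive definite such that H = C^{-1} satisfies H_{ij} ≤ 0 for all i ≠ j. Define F : 2^R → ℝ by F(K) = (C 1)_Kᵀ (C_{KK})^{-1} (C 1)_K for nonempty K ⊆ R and F(∅) = 0, where 1 is the all-ones vector. Then F is submodular: for all A ⊆ B ⊆ R and k ∈ R \ B, F(A ∪ {k}) − F(A) ≥ F(B ∪ {k}) − F(B). -/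
open Matrix

/-- The subvector of `v` with entries indexed by the finite subset `K`. -/
def Finset.subVec {R : Type*} [Fintype R] [DecidableEq R]
    (v : R → ℝ) (K : Finset R) : ↥K → ℝ :=
  fun i => v i


set_option linter.unusedSectionVars false

namespace VarRed

variable {R : Type*} [Fintype R] [DecidableEq R]

lemma sum_ext (S : Finset R) (f : R → ℝ) (hf : ∀ i ∉ S, f i = 0) :
    ∑ i, f i = ∑ i : ↥S, f i.val := by
  rw [Finset.sum_coe_sort]
  exact (Finset.sum_subset (Finset.subset_univ S) (fun i _ hi => hf i hi)).symm

lemma dsym (H : Matrix R R ℝ) (hsym : ∀ i j, H i j = H j i) (a b : R → ℝ) :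
    a ⬝ᵥ H *ᵥ b = b ⬝ᵥ H *ᵥ a := by
  simp only [dotProduct, mulVec, Finset.mul_sum]
  rw [Finset.sum_comm]
  refine Finset.sum_congr rfl fun i _ => Finset.sum_congr rfl fun j _ => ?_
  rw [hsym i j]; ring

lemma Q_nonneg {H : Matrix R R ℝ} (hH : H.PosDef) (z : R → ℝ) : 0 ≤ z ⬝ᵥ H *ᵥ z := by
  rcases eq_or_ne z 0 with rfl | hz
  · simp
  · have := hH.dotProduct_mulVec_pos hz
    simp only [star_trivial] at this
    exact le_of_lt this

lemma Q_pos {H : Matrix R R ℝ} (hH : H.PosDef) {z : R → ℝ} (hz : z ≠ 0) :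
    0 < z ⬝ᵥ H *ᵥ z := by
  have := hH.dotProduct_mulVec_pos hz
  simpa using this

lemma principalSub_posDef {H : Matrix R R ℝ} (hH : H.PosDef) (S : Finset R) :
    (H.principalSub S).PosDef := by
  refine Matrix.PosDef.of_dotProduct_mulVec_pos (hH.1.submatrix _) fun x hx => ?_
  set x' : R → ℝ := fun i => if h : i ∈ S then x ⟨i, h⟩ else 0 with hx'def
  have hx'zero : ∀ i ∉ S, x' i = 0 := fun i hi => dif_neg hi
  have hx'ne : x' ≠ 0 := by
    intro h0
    apply hx
    funext i
    have := congrFun h0 i.val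
    simpa [hx'def, i.2] using this
  have key : star x ⬝ᵥ (H.principalSub S) *ᵥ x = x' ⬝ᵥ H *ᵥ x' := by
    simp only [star_trivial, dotProduct, mulVec, Matrix.principalSub, submatrix_apply]
    rw [sum_ext S (fun i => x' i * ∑ j, H i j * x' j)
      (fun i hi => by simp [hx'zero i hi])]
    refine Finset.sum_congr rfl fun i _ => ?_
    have hxi : x' i.val = x i := by simp [hx'def, i.2]
    rw [hxi]
    congr 1
    rw [sum_ext S (fun j => H i.val j * x' j) (fun j hj => by simp [hx'zero j hj])]
    refine Finset.sum_congr rfl fun j _ => ?_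
    simp [hx'def, j.2]
  rw [key]
  exact Q_pos hH hx'ne

/-- Extension by zero of `(H_SS)⁻¹ 𝟙`. -/
noncomputable def xs (H : Matrix R R ℝ) (S : Finset R) : R → ℝ :=
  fun i => if h : i ∈ S then ((H.principalSub S)⁻¹ *ᵥ (fun _ => (1:ℝ))) ⟨i, h⟩ else 0

lemma xs_zero (H : Matrix R R ℝ) (S : Finset R) {i : R} (hi : i ∉ S) : xs H S i = 0 :=
  dif_neg hi

lemma mulVec_restrict (H : Matrix R R ℝ) (S : Finset R) (x' : R → ℝ)
    (hx' : ∀ j ∉ S, x' j = 0) {i : R} (hi : i ∈ S) :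
    (H *ᵥ x') i = ((H.principalSub S) *ᵥ (fun j : ↥S => x' j.val)) ⟨i, hi⟩ := by
  simp only [mulVec, dotProduct, Matrix.principalSub, submatrix_apply]
  exact sum_ext S (fun j => H i j * x' j) (fun j hj => by simp [hx' j hj])

lemma xs_solve {H : Matrix R R ℝ} (hH : H.PosDef) (S : Finset R) {i : R} (hi : i ∈ S) :
    (H *ᵥ xs H S) i = 1 := by
  have hdet : IsUnit (H.principalSub S).det :=
    (principalSub_posDef hH S).det_pos.ne'.isUnit
  have hrestr : (fun j : ↥S => xs H S j.val) = (H.principalSub S)⁻¹ *ᵥ (fun _ => (1:ℝ)) := by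
    funext j
    simp [xs, j.2]
  rw [mulVec_restrict H S (xs H S) (fun j hj => xs_zero H S hj) hi, hrestr,
    Matrix.mulVec_mulVec, Matrix.mul_nonsing_inv _ hdet, Matrix.one_mulVec]


noncomputable def phi (H : Matrix R R ℝ) (x : R → ℝ) : ℝ :=
  2 * (∑ i, x i) - x ⬝ᵥ H *ᵥ x

lemma phi_diff {H : Matrix R R ℝ} (hH : H.PosDef) (hsym : ∀ i j, H i j = H j i)
    (S : Finset R) (y : R → ℝ) (hy : ∀ i ∉ S, y i = 0) :
    phi H (xs H S) = phi H y + (xs H S - y) ⬝ᵥ H *ᵥ (xs H S - y) := by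
  set x := xs H S with hx
  have h1 : ∑ i, (x i - y i) = (x - y) ⬝ᵥ (H *ᵥ x) := by
    simp only [dotProduct, Pi.sub_apply]
    refine Finset.sum_congr rfl fun i _ => ?_
    by_cases hi : i ∈ S
    · rw [xs_solve hH S hi]; ring
    · have hxi : x i = 0 := xs_zero H S hi
      rw [hxi, hy i hi]; ring
  have h2 : (x - y) ⬝ᵥ H *ᵥ (x - y)
      = x ⬝ᵥ H *ᵥ x - 2 * (y ⬝ᵥ H *ᵥ x) + y ⬝ᵥ H *ᵥ y := by
    rw [Matrix.mulVec_sub, dotProduct_sub, sub_dotProduct, sub_dotProduct,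
      dsym H hsym x y]
    ring
  have h3 : ∑ i, (x i - y i) = ∑ i, x i - ∑ i, y i := by
    rw [Finset.sum_sub_distrib]
  have h4 : (x - y) ⬝ᵥ (H *ᵥ x) = x ⬝ᵥ H *ᵥ x - y ⬝ᵥ H *ᵥ x := by
    rw [sub_dotProduct]
  simp only [phi]
  rw [h2]
  have := h1
  rw [h3, h4] at this
  linarith

lemma phi_max {H : Matrix R R ℝ} (hH : H.PosDef) (hsym : ∀ i j, H i j = H j i)
    (S : Finset R) (y : R → ℝ) (hy : ∀ i ∉ S, y i = 0) :
    phi H y ≤ phi H (xs H S) := by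
  rw [phi_diff hH hsym S y hy]
  have := Q_nonneg hH (xs H S - y)
  linarith

lemma xs_nonneg {H : Matrix R R ℝ} (hH : H.PosDef) (hsym : ∀ i j, H i j = H j i)
    (hoff : ∀ i j, i ≠ j → H i j ≤ 0) (S : Finset R) (i : R) :
    0 ≤ xs H S i := by
  set x := xs H S with hxdef
  set p : R → ℝ := fun i => max (x i) 0 with hpdef
  set m : R → ℝ := fun i => max (-(x i)) 0 with hmdef
  have hpm : ∀ i, p i - m i = x i := by
    intro i
    rcases le_total (x i) 0 with h | h
    · simp [hpdef, hmdef, max_eq_right h, max_eq_left (by linarith : (0:ℝ) ≤ -(x i))]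
    · simp [hpdef, hmdef, max_eq_left h, max_eq_right (by linarith : -(x i) ≤ 0)]
  have hpm0 : ∀ i, p i * m i = 0 := by
    intro i
    rcases le_total (x i) 0 with h | h
    · simp [hpdef, max_eq_right h]
    · simp [hmdef, max_eq_right (by linarith : -(x i) ≤ 0)]
  have hp0 : ∀ i, 0 ≤ p i := fun i => le_max_right _ _
  have hm0 : ∀ i, 0 ≤ m i := fun i => le_max_right _ _
  have hpsupp : ∀ j ∉ S, p j = 0 := by
    intro j hj
    have : x j = 0 := xs_zero H S hj
    simp [hpdef, this]
  have hxmp : x - p = -m := by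
    funext j; simp only [Pi.sub_apply, Pi.neg_apply]
    have := hpm j; linarith
  -- exact identity
  have hid : phi H x = phi H p + m ⬝ᵥ H *ᵥ m := by
    have := phi_diff hH hsym S p hpsupp
    rw [hxmp] at this
    rwa [Matrix.mulVec_neg, dotProduct_neg, neg_dotProduct, neg_neg] at this
  -- direct estimate
  have hxq : x ⬝ᵥ H *ᵥ x
      = p ⬝ᵥ H *ᵥ p - 2 * (p ⬝ᵥ H *ᵥ m) + m ⬝ᵥ H *ᵥ m := by
    have hx_eq : x = p - m := by funext j; simp [ (hpm j).symm ]
    rw [hx_eq, Matrix.mulVec_sub, dotProduct_sub, sub_dotProduct, sub_dotProduct,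
      dsym H hsym m p]
    ring
  have hpHm : p ⬝ᵥ H *ᵥ m ≤ 0 := by
    simp only [dotProduct, mulVec, Finset.mul_sum]
    refine Finset.sum_nonpos fun i _ => Finset.sum_nonpos fun j _ => ?_
    rcases eq_or_ne i j with rfl | hij
    · have hrw : p i * (H i i * m i) = H i i * (p i * m i) := by ring
      rw [hrw, hpm0 i, mul_zero]
    · have h1 := hoff i j hij
      have h2 := mul_nonneg (hp0 i) (hm0 j)
      nlinarith
  have hsm : 0 ≤ ∑ i, m i := Finset.sum_nonneg fun i _ => hm0 i
  have hsum_eq : ∑ i, p i - ∑ i, m i = ∑ i, x i := by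
    rw [← Finset.sum_sub_distrib]
    exact Finset.sum_congr rfl fun i _ => hpm i
  -- phi p - phi x = 2∑m - 2 pHm + mHm
  have hphi_px : phi H p - phi H x
      = 2 * (∑ i, m i) - 2 * (p ⬝ᵥ H *ᵥ m) + m ⬝ᵥ H *ᵥ m := by
    simp only [phi]
    rw [hxq]
    linarith
  have hmm : m ⬝ᵥ H *ᵥ m ≤ 0 := by
    have h5 : phi H p - phi H x = -(m ⬝ᵥ H *ᵥ m) := by rw [hid]; ring
    rw [h5] at hphi_px
    linarith
  have hmz : m = 0 := by
    by_contra hne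
    exact absurd hmm (not_le.mpr (Q_pos hH hne))
  have : m i = 0 := by rw [hmz]; rfl
  have := hpm i
  have hpi := hp0 i
  rw [hmz] at this
  simp at this
  linarith [hp0 i, this ▸ hpi]


lemma max_min_ineq (a b c d : ℝ) :
    a * b + c * d ≤ max a c * max b d + min a c * min b d := by
  rcases le_total a c with h | h <;> rcases le_total b d with h' | h' <;>
    simp [max_eq_left, max_eq_right, min_eq_left, min_eq_right, h, h'] <;> nlinarith

lemma sq_max_min (a c : ℝ) : max a c * max a c + min a c * min a c = a * a + c * c := by
  rcases le_total a c with h | h <;>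
    simp [max_eq_left, max_eq_right, min_eq_left, min_eq_right, h] <;> ring

lemma phi_lattice {H : Matrix R R ℝ} (hoff : ∀ i j, i ≠ j → H i j ≤ 0) (x y : R → ℝ) :
    phi H x + phi H y
      ≤ phi H (fun i => max (x i) (y i)) + phi H (fun i => min (x i) (y i)) := by
  have hlin : ∑ i, max (x i) (y i) + ∑ i, min (x i) (y i) = (∑ i, x i) + ∑ i, y i := by
    rw [← Finset.sum_add_distrib, ← Finset.sum_add_distrib]
    exact Finset.sum_congr rfl fun i _ => max_add_min _ _
  have hquad : (fun i => max (x i) (y i)) ⬝ᵥ H *ᵥ (fun i => max (x i) (y i))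
      + (fun i => min (x i) (y i)) ⬝ᵥ H *ᵥ (fun i => min (x i) (y i))
      ≤ x ⬝ᵥ H *ᵥ x + y ⬝ᵥ H *ᵥ y := by
    simp only [dotProduct, mulVec, Finset.mul_sum]
    rw [← Finset.sum_add_distrib, ← Finset.sum_add_distrib]
    refine Finset.sum_le_sum fun i _ => ?_
    rw [← Finset.sum_add_distrib, ← Finset.sum_add_distrib]
    refine Finset.sum_le_sum fun j _ => ?_
    rcases eq_or_ne i j with rfl | hij
    · have hd := sq_max_min (x i) (y i)
      apply le_of_eq
      linear_combination (H i i) * hd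
    · have h1 := hoff i j hij
      have h2 := max_min_ineq (x i) (x j) (y i) (y j)
      nlinarith
  simp only [phi]
  linarith

lemma g_supermod {H : Matrix R R ℝ} (hH : H.PosDef) (hsym : ∀ i j, H i j = H j i)
    (hoff : ∀ i j, i ≠ j → H i j ≤ 0) {T S : Finset R} (hTS : T ⊆ S) {k : R}
    (hk : k ∉ S) :
    phi H (xs H S) + phi H (xs H (insert k T))
      ≤ phi H (xs H (insert k S)) + phi H (xs H T) := by
  set x := xs H S
  set y := xs H (insert k T)
  have hxsupp : ∀ i ∉ S, x i = 0 := fun i hi => xs_zero H S hi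
  have hysupp : ∀ i ∉ insert k T, y i = 0 := fun i hi => xs_zero H _ hi
  have hx0 : ∀ i, 0 ≤ x i := xs_nonneg hH hsym hoff S
  have hy0 : ∀ i, 0 ≤ y i := xs_nonneg hH hsym hoff (insert k T)
  have hmax : ∀ i ∉ insert k S, max (x i) (y i) = 0 := by
    intro i hi
    have hiS : i ∉ S := fun h => hi (Finset.mem_insert_of_mem h)
    have hiT : i ∉ insert k T := by
      intro h
      rcases Finset.mem_insert.mp h with rfl | h
      · exact hi (Finset.mem_insert_self _ _)
      · exact hiS (hTS h)
    rw [hxsupp i hiS, hysupp i hiT]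
    simp
  have hmin : ∀ i ∉ T, min (x i) (y i) = 0 := by
    intro i hi
    by_cases hiS : i ∈ S
    · have hiT : i ∉ insert k T := by
        intro h
        rcases Finset.mem_insert.mp h with rfl | h
        · exact hk hiS
        · exact hi h
      rw [hysupp i hiT]
      exact min_eq_right (hx0 i)
    · rw [hxsupp i hiS]
      exact min_eq_left (hy0 i)
  calc phi H x + phi H y
      ≤ phi H (fun i => max (x i) (y i)) + phi H (fun i => min (x i) (y i)) :=
        phi_lattice hoff x y
    _ ≤ phi H (xs H (insert k S)) + phi H (xs H T) :=
        add_le_add (phi_max hH hsym _ _ hmax) (phi_max hH hsym _ _ hmin)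


lemma phi_xs {H : Matrix R R ℝ} (hH : H.PosDef) (S : Finset R) :
    phi H (xs H S) = ∑ i, xs H S i := by
  have hq : xs H S ⬝ᵥ H *ᵥ xs H S = ∑ i, xs H S i := by
    simp only [dotProduct]
    refine Finset.sum_congr rfl fun i _ => ?_
    by_cases hi : i ∈ S
    · rw [xs_solve hH S hi, mul_one]
    · rw [xs_zero H S hi, zero_mul]
  simp only [phi, hq]; ring

end VarRed

open VarRed in
/-- If `C` is symmetric positive definite and its inverse `H = C⁻¹` has
nonpositive off-diagonal entries, then the variance reduction
`F(K) = (C 1)_Kᵀ (C_{KK})⁻¹ (C 1)_K` (with `F(∅) = 0`, realized here as an empty sum)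
is submodular: `F(A ∪ {k}) − F(A) ≥ F(B ∪ {k}) − F(B)` for `A ⊆ B ⊆ R`, `k ∈ R \ B`. -/
theorem variance_reduction_submodular
    {R : Type*} [Fintype R] [DecidableEq R]
    (C : Matrix R R ℝ) (hC : C.PosDef)
    (hCinv_offdiag : ∀ i j : R, i ≠ j → C⁻¹ i j ≤ 0)
    (F : Finset R → ℝ)
    (hF : ∀ K : Finset R,
      F K = Finset.subVec (C.mulVec fun _ => 1) K ⬝ᵥ
              (C.principalSub K)⁻¹.mulVec (Finset.subVec (C.mulVec fun _ => 1) K)) :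
    ∀ A B : Finset R, A ⊆ B → ∀ k ∉ B,
      F (insert k B) - F B ≤ F (insert k A) - F A := by
  intro A B hAB k hkB
  have hH : (C⁻¹).PosDef := hC.inv
  have hsymC : ∀ i j, C i j = C j i := fun i j => by
    have := hC.1.apply j i; simpa using this
  have hsymH : ∀ i j, C⁻¹ i j = C⁻¹ j i := fun i j => by
    have := hH.1.apply j i; simpa using this
  have key : ∀ K : Finset R,
      F K = (∑ i, (C *ᵥ fun _ => (1:ℝ)) i) - ∑ i, xs C⁻¹ (Kᶜ) i := by
    intro K
    set w : R → ℝ := fun i => 1 - (C⁻¹ *ᵥ xs C⁻¹ (Kᶜ)) i with hwdef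
    have hwS : ∀ i ∉ K, w i = 0 := by
      intro i hi
      have hiS : i ∈ Kᶜ := Finset.mem_compl.mpr hi
      simp [hwdef, xs_solve hH (Kᶜ) hiS]
    have hCu : C *ᵥ (C⁻¹ *ᵥ xs C⁻¹ (Kᶜ)) = xs C⁻¹ (Kᶜ) := by
      rw [Matrix.mulVec_mulVec, Matrix.mul_nonsing_inv _ hC.det_pos.ne'.isUnit,
        Matrix.one_mulVec]
    have hw_eq : w = ((fun _ => (1:ℝ)) - C⁻¹ *ᵥ xs C⁻¹ (Kᶜ) : R → ℝ) := rfl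
    have hCw : C *ᵥ w = (C *ᵥ fun _ => (1:ℝ)) - xs C⁻¹ (Kᶜ) := by
      rw [hw_eq, Matrix.mulVec_sub, hCu]
    have hrestr : (C.principalSub K) *ᵥ (fun j : ↥K => w j.val)
        = Finset.subVec (C *ᵥ fun _ => (1:ℝ)) K := by
      funext i
      have h1 := (mulVec_restrict C K _ hwS i.2).symm
      have h2 : (⟨i.val, i.2⟩ : ↥K) = i := Subtype.ext rfl
      rw [h2] at h1
      rw [h1, hCw]
      have hx0 : xs C⁻¹ (Kᶜ) i.val = 0 :=
        xs_zero _ _ (by simp [Finset.mem_compl, i.2])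
      simp [Finset.subVec, hx0]
    have hdetK : IsUnit (C.principalSub K).det :=
      (principalSub_posDef hC K).det_pos.ne'.isUnit
    have hinv : (C.principalSub K)⁻¹ *ᵥ Finset.subVec (C *ᵥ fun _ => (1:ℝ)) K
        = (fun j : ↥K => w j.val) := by
      rw [← hrestr, Matrix.mulVec_mulVec, Matrix.nonsing_inv_mul _ hdetK,
        Matrix.one_mulVec]
    rw [hF K]
    show Finset.subVec (C *ᵥ fun _ => (1:ℝ)) K ⬝ᵥ
        (C.principalSub K)⁻¹ *ᵥ Finset.subVec (C *ᵥ fun _ => (1:ℝ)) K = _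
    rw [hinv]
    have h1 : Finset.subVec (C *ᵥ fun _ => (1:ℝ)) K ⬝ᵥ (fun j : ↥K => w j.val)
        = ∑ i, (C *ᵥ fun _ => (1:ℝ)) i * w i := by
      rw [sum_ext K _ (fun i hi => by rw [hwS i hi]; ring)]
      rfl
    rw [h1]
    have hbu : (C *ᵥ fun _ => (1:ℝ)) ⬝ᵥ (C⁻¹ *ᵥ xs C⁻¹ (Kᶜ)) = ∑ i, xs C⁻¹ (Kᶜ) i := by
      rw [dotProduct_comm, dsym C hsymC, hCu]
      simp [dotProduct]
    rw [← hbu]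
    simp only [hwdef, dotProduct]
    rw [← Finset.sum_sub_distrib]
    exact Finset.sum_congr rfl fun i _ => by ring
  have hkA : k ∉ A := fun h => hkB (hAB h)
  have hsub : Bᶜ.erase k ⊆ Aᶜ.erase k :=
    Finset.erase_subset_erase _ (Finset.compl_subset_compl.mpr hAB)
  have hknot : k ∉ Aᶜ.erase k := Finset.notMem_erase _ _
  have hsm := g_supermod hH hsymH hCinv_offdiag hsub hknot
  rw [Finset.insert_erase (Finset.mem_compl.mpr hkB),
    Finset.insert_erase (Finset.mem_compl.mpr hkA)] at hsm
  rw [phi_xs hH, phi_xs hH, phi_xs hH, phi_xs hH] at hsm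
  rw [key, key, key, key, Finset.compl_insert, Finset.compl_insert]
  linarith
end

section
/- Let R be a finite set, C ∈ ℝ^{R×R} symmetric positive definite, and define F : 2^R → ℝ by F(K) = (C 1)_Kᵀ (C_{KK})^{-1} (C 1)_K for nonempty K ⊆ R and F(∅) = 0, where 1 is the all-ones vector. Then F is monotone nondecreasing: for all K ⊆ R and k ∈ R \ K, F(K ∪ {k}) ≥ F(K) ≥ 0. -/
open Matrix

/-- Extension of a vector on `K` by zero. -/
noncomputable def extZero {R : Type*} [Fintype R] [DecidableEq R]
    (K : Finset R) (x : ↥K → ℝ) : R → ℝ :=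
  fun i => if h : i ∈ K then x ⟨i, h⟩ else 0

lemma extZero_dot {R : Type*} [Fintype R] [DecidableEq R]
    (K : Finset R) (x : ↥K → ℝ) (v : R → ℝ) :
    extZero K x ⬝ᵥ v = x ⬝ᵥ (fun i : ↥K => v i) := by
  classical
  unfold dotProduct extZero
  rw [← Finset.sum_subset K.subset_univ (by intro i _ hi; simp [dif_neg hi]),
    ← Finset.sum_attach K (fun i => (if h : i ∈ K then x ⟨i, h⟩ else 0) * v i)]
  exact Finset.sum_congr rfl fun i _ => by simp [i.2]

lemma extZero_quad {R : Type*} [Fintype R] [DecidableEq R]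
    (C : Matrix R R ℝ) (K : Finset R) (x : ↥K → ℝ) :
    extZero K x ⬝ᵥ (C *ᵥ extZero K x) = x ⬝ᵥ ((C.principalSub K) *ᵥ x) := by
  rw [extZero_dot]
  congr 1
  funext i
  show (C i.val) ⬝ᵥ extZero K x = _
  rw [dotProduct_comm, extZero_dot, dotProduct_comm]
  rfl

lemma extZero_ne_zero {R : Type*} [Fintype R] [DecidableEq R]
    (K : Finset R) (x : ↥K → ℝ) (hx : x ≠ 0) : extZero K x ≠ 0 := by
  obtain ⟨i, hi⟩ := Function.ne_iff.mp hx
  refine Function.ne_iff.mpr ⟨i.val, ?_⟩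
  simpa [extZero, i.2] using hi

lemma principalSub_posDef {R : Type*} [Fintype R] [DecidableEq R]
    {C : Matrix R R ℝ} (hC : C.PosDef) (K : Finset R) :
    (C.principalSub K).PosDef := by
  refine Matrix.PosDef.of_dotProduct_mulVec_pos (hC.1.submatrix _) fun x hx => ?_
  have := hC.dotProduct_mulVec_pos (extZero_ne_zero K x hx)
  simpa [extZero_quad C K x] using this

/-- Variational bound: for PD `A`, `2⟨y,b⟩ - ⟨y,Ay⟩ ≤ ⟨b, A⁻¹ b⟩`. -/
lemma key_bound {n : Type*} [Fintype n] [DecidableEq n]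
    {A : Matrix n n ℝ} (hA : A.PosDef) (b y : n → ℝ) :
    2 * (y ⬝ᵥ b) - y ⬝ᵥ (A *ᵥ y) ≤ b ⬝ᵥ (A⁻¹ *ᵥ b) := by
  have hdet : IsUnit A.det := (Matrix.isUnit_iff_isUnit_det A).mp hA.isUnit
  set z := A⁻¹ *ᵥ b with hzdef
  have hz : A *ᵥ z = b := by
    rw [hzdef, mulVec_mulVec, Matrix.mul_nonsing_inv A hdet, one_mulVec]
  have hAT : Aᵀ = A := by
    ext i j
    have := congrFun (congrFun hA.1 i) j
    simpa [Matrix.conjTranspose_apply] using this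
  have hsymm : ∀ u v : n → ℝ, u ⬝ᵥ (A *ᵥ v) = v ⬝ᵥ (A *ᵥ u) := by
    intro u v
    rw [dotProduct_mulVec, ← mulVec_transpose, hAT, dotProduct_comm]
  have hbz : b ⬝ᵥ (A⁻¹ *ᵥ b) = z ⬝ᵥ b := by rw [← hzdef, dotProduct_comm]
  have hnn : 0 ≤ (y - z) ⬝ᵥ (A *ᵥ (y - z)) := by
    have := hA.posSemidef.dotProduct_mulVec_nonneg (y - z)
    simpa using this
  have hexp : (y - z) ⬝ᵥ (A *ᵥ (y - z))
      = y ⬝ᵥ (A *ᵥ y) - 2 * (y ⬝ᵥ b) + z ⬝ᵥ b := by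
    have h1 : y ⬝ᵥ (A *ᵥ z) = y ⬝ᵥ b := by rw [hz]
    have h2 : z ⬝ᵥ (A *ᵥ y) = y ⬝ᵥ b := by rw [hsymm, hz]
    have h3 : z ⬝ᵥ (A *ᵥ z) = z ⬝ᵥ b := by rw [hz]
    rw [mulVec_sub, dotProduct_sub, sub_dotProduct, sub_dotProduct,
      h1, h2, h3]
    ring
  linarith [hnn, hexp.symm.le]

/-- The value is attained at `z = A⁻¹ b`. -/
lemma key_eq {n : Type*} [Fintype n] [DecidableEq n]
    {A : Matrix n n ℝ} (hA : A.PosDef) (b : n → ℝ) :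
    b ⬝ᵥ (A⁻¹ *ᵥ b)
      = 2 * ((A⁻¹ *ᵥ b) ⬝ᵥ b) - (A⁻¹ *ᵥ b) ⬝ᵥ (A *ᵥ (A⁻¹ *ᵥ b)) := by
  have hdet : IsUnit A.det := (Matrix.isUnit_iff_isUnit_det A).mp hA.isUnit
  have hz : A *ᵥ (A⁻¹ *ᵥ b) = b := by
    rw [mulVec_mulVec, Matrix.mul_nonsing_inv A hdet, one_mulVec]
  rw [hz, dotProduct_comm]
  ring

/-- If `C` is symmetric positive definite, then the variance reduction
`F(K) = (C 1)_Kᵀ (C_{KK})⁻¹ (C 1)_K` (with `F(∅) = 0`, realized here as an empty sum)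
is monotone nondecreasing: `F(K ∪ {k}) ≥ F(K) ≥ 0` for all `K ⊆ R` and `k ∈ R \ K`. -/
theorem variance_reduction_monotone
    {R : Type*} [Fintype R] [DecidableEq R]
    (C : Matrix R R ℝ) (hC : C.PosDef)
    (F : Finset R → ℝ)
    (hF : ∀ K : Finset R,
      F K = Finset.subVec (C.mulVec fun _ => 1) K ⬝ᵥ
              (C.principalSub K)⁻¹.mulVec (Finset.subVec (C.mulVec fun _ => 1) K)) :
    ∀ K : Finset R, ∀ k ∉ K, 0 ≤ F K ∧ F K ≤ F (insert k K) := by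
  set b : R → ℝ := C.mulVec (fun _ => 1) with hb
  -- upper bound property for each K
  have hub : ∀ (K : Finset R) (x : ↥K → ℝ),
      2 * (x ⬝ᵥ Finset.subVec b K) - x ⬝ᵥ ((C.principalSub K) *ᵥ x) ≤ F K := by
    intro K x
    rw [hF K]
    exact key_bound (principalSub_posDef hC K) _ x
  -- value attained: F K = 2⟨xs,b⟩ - ⟨xs,C xs⟩ for xs the extended optimizer
  have hval : ∀ K : Finset R,
      F K = 2 * (extZero K ((C.principalSub K)⁻¹ *ᵥ Finset.subVec b K) ⬝ᵥ b)
        - extZero K ((C.principalSub K)⁻¹ *ᵥ Finset.subVec b K) ⬝ᵥ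
            (C *ᵥ extZero K ((C.principalSub K)⁻¹ *ᵥ Finset.subVec b K)) := by
    intro K
    rw [hF K, key_eq (principalSub_posDef hC K), extZero_dot, extZero_quad]
    rfl
  intro K k hk
  constructor
  · have := hub K 0
    simpa using this
  · set z := (C.principalSub K)⁻¹ *ᵥ Finset.subVec b K with hzdef
    set xs := extZero K z with hxs
    set L := insert k K with hL
    have hKL : K ⊆ L := Finset.subset_insert k K
    set y : ↥L → ℝ := fun i => xs i.val with hy
    have hylift : extZero L y = xs := by
      funext i
      by_cases h : i ∈ L
      · simp [extZero, h, hy]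
      · have hiK : i ∉ K := fun hK => h (hKL hK)
        simp [extZero, h, hxs, hiK]
    have h1 : y ⬝ᵥ Finset.subVec b L = xs ⬝ᵥ b := by
      rw [← hylift, extZero_dot]; rfl
    have h2 : y ⬝ᵥ ((C.principalSub L) *ᵥ y) = xs ⬝ᵥ (C *ᵥ xs) := by
      rw [← hylift, extZero_quad]
    have := hub L y
    rw [h1, h2] at this
    calc F K = 2 * (xs ⬝ᵥ b) - xs ⬝ᵥ (C *ᵥ xs) := hval K
      _ ≤ F L := this
end

section
/- Let R be a finite set, let F : 2^R → ℝ be submodular (F(A ∪ {k}) − F(A) ≥ F(B ∪ {k}) − F(B) for all A ⊆ B ⊆ R and k ∈ R \ B), monotone nondecreasing (F(A) ≤ F(B) whenever A ⊆ B), with F(∅) = 0. Fix s with 1 ≤ s ≤ |R| and let K₀ = ∅ and, for t = 1, …, s, K_t = K_{t−1} ∪ {i_t} where i_t maximizes F(K_{t−1} ∪ {i}) over i ∈ R \ K_{t−1}. Then F(K_s) ≥ (1 − 1/e) · max { F(K) : K ⊆ R, |K| = s }. -/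
open Matrix

lemma greedy_aux_sum {R : Type*} [DecidableEq R]
    (F : Finset R → ℝ)
    (hsub : ∀ A B : Finset R, A ⊆ B → ∀ k ∉ B,
      F (insert k B) - F B ≤ F (insert k A) - F A)
    (hmono : ∀ A B : Finset R, A ⊆ B → F A ≤ F B)
    (A S : Finset R) :
    F (A ∪ S) ≤ F A + ∑ k ∈ S, (F (insert k A) - F A) := by
  induction S using Finset.induction_on with
  | empty => simp
  | insert _ _ ha ih =>
    rename_i a s
    rw [Finset.sum_insert ha, Finset.union_insert]
    by_cases h : a ∈ A ∪ s
    · rw [Finset.insert_eq_self.mpr h]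
      have : F A ≤ F (insert a A) := hmono _ _ (Finset.subset_insert _ _)
      linarith
    · have := hsub A (A ∪ s) Finset.subset_union_left a h
      linarith

/-- Nemhauser–Wolsey–Fisher: If `F : 2^R → ℝ` is submodular, monotone
nondecreasing and `F(∅) = 0`, and `K_0 = ∅, K_1, …, K_s` is a greedy sequence (at each
step a greedily-chosen element maximizing the marginal value is inserted), then
`F(K_s) ≥ (1 − 1/e) · max { F(K) : |K| = s }`. -/
theorem greedy_submodular_guarantee
    {R : Type*} [Fintype R] [DecidableEq R]
    (F : Finset R → ℝ)
    (hsub : ∀ A B : Finset R, A ⊆ B → ∀ k ∉ B,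
      F (insert k B) - F B ≤ F (insert k A) - F A)
    (hmono : ∀ A B : Finset R, A ⊆ B → F A ≤ F B)
    (hempty : F ∅ = 0)
    (s : ℕ) (hs1 : 1 ≤ s) (hs2 : s ≤ Fintype.card R)
    (Kgreedy : ℕ → Finset R) (hK0 : Kgreedy 0 = ∅)
    (hgreedy : ∀ t : ℕ, t < s → ∃ i : R, i ∉ Kgreedy t ∧
      Kgreedy (t + 1) = insert i (Kgreedy t) ∧
      ∀ j : R, j ∉ Kgreedy t → F (insert j (Kgreedy t)) ≤ F (insert i (Kgreedy t))) :
    ∀ K : Finset R, K.card = s →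
      (1 - 1 / Real.exp 1) * F K ≤ F (Kgreedy s) := by
  intro K hK
  have hspos : (0:ℝ) < (s:ℝ) := by exact_mod_cast Nat.lt_of_lt_of_le Nat.zero_lt_one hs1
  have hs1' : (1:ℝ) ≤ (s:ℝ) := by exact_mod_cast hs1
  have h1s : (0:ℝ) ≤ 1 - 1/(s:ℝ) := by
    have : (1:ℝ)/(s:ℝ) ≤ 1 := by rw [div_le_one hspos]; exact hs1'
    linarith
  have hOPTnn : 0 ≤ F K := by
    have := hmono ∅ K (Finset.empty_subset K); linarith
  -- per-step contraction
  have key : ∀ t, t < s →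
      F K - F (Kgreedy (t+1)) ≤ (1 - 1/(s:ℝ)) * (F K - F (Kgreedy t)) := by
    intro t ht
    obtain ⟨i, hi, hK1, hmax⟩ := hgreedy t ht
    set A := Kgreedy t with hA
    have hg0 : 0 ≤ F (insert i A) - F A :=
      sub_nonneg.mpr (hmono _ _ (Finset.subset_insert _ _))
    have h1 : F K ≤ F (A ∪ K) := hmono _ _ Finset.subset_union_right
    have h2 := greedy_aux_sum F hsub hmono A K
    have h3 : ∑ k ∈ K, (F (insert k A) - F A) ≤
        ∑ _k ∈ K, (F (insert i A) - F A) := by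
      apply Finset.sum_le_sum
      intro k _
      by_cases hk : k ∈ A
      · rw [Finset.insert_eq_self.mpr hk]; linarith
      · exact sub_le_sub_right (hmax k hk) _
    have h4 : ∑ _k ∈ K, (F (insert i A) - F A) = (s:ℝ) * (F (insert i A) - F A) := by
      rw [Finset.sum_const, hK, nsmul_eq_mul]
    have hstep : F K - F A ≤ (s:ℝ) * (F (insert i A) - F A) := by
      rw [← h4]; linarith
    have hdiv : (1/(s:ℝ)) * (F K - F A) ≤ F (insert i A) - F A := by
      have := mul_le_mul_of_nonneg_left hstep (le_of_lt (one_div_pos.mpr hspos))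
      rwa [← mul_assoc, one_div_mul_cancel (ne_of_gt hspos), one_mul] at this
    rw [hK1]
    nlinarith [hdiv]
  -- induction
  have ind : ∀ t, t ≤ s → F K - F (Kgreedy t) ≤ (1 - 1/(s:ℝ))^t * F K := by
    intro t
    induction t with
    | zero => intro _; simp [hK0, hempty]
    | succ n ih =>
      intro hle
      have hn : n < s := Nat.lt_of_succ_le hle
      calc F K - F (Kgreedy (n+1)) ≤ (1 - 1/(s:ℝ)) * (F K - F (Kgreedy n)) := key n hn
        _ ≤ (1 - 1/(s:ℝ)) * ((1 - 1/(s:ℝ))^n * F K) :=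
            mul_le_mul_of_nonneg_left (ih hn.le) h1s
        _ = (1 - 1/(s:ℝ))^(n+1) * F K := by ring
  -- (1 - 1/s)^s ≤ 1/e
  have hexp : (1 - 1/(s:ℝ))^s ≤ 1 / Real.exp 1 := by
    have h1 : 1 - 1/(s:ℝ) ≤ Real.exp (-(1/(s:ℝ))) := by
      have := Real.add_one_le_exp (-(1/(s:ℝ)))
      linarith
    calc (1 - 1/(s:ℝ))^s ≤ (Real.exp (-(1/(s:ℝ))))^s := pow_le_pow_left₀ h1s h1 s
      _ = Real.exp ((s:ℝ) * (-(1/(s:ℝ)))) := (Real.exp_nat_mul _ s).symm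
      _ = 1 / Real.exp 1 := by
          rw [mul_neg, mul_one_div, div_self (ne_of_gt hspos), Real.exp_neg, one_div]
  have hfin := ind s le_rfl
  have : (1 - 1/(s:ℝ))^s * F K ≤ (1 / Real.exp 1) * F K :=
    mul_le_mul_of_nonneg_right hexp hOPTnn
  linarith
end

section
/- Let R be a finite set and C ∈ ℝ^{R×R} symmetric positive definite such that H = C^{-1} satisfies H_{ij} ≤ 0 for all i ≠ j. Define F(K) = (C 1)_Kᵀ (C_{KK})^{-1} (C 1)_K for nonempty K ⊆ R and F(∅) = 0, where 1 is the all-ones vector. Fix s with 1 ≤ s ≤ |R| and let K₀ = ∅ and, for t = 1, …, s, K_t = K_{t−1} ∪ {i_t} where i_t maximizes F(K_{t−1} ∪ {i}) over i ∈ R \ K_{t−1}. Then F(K_s) ≥ (1 − 1/e) · max { F(K) : K ⊆ R, |K| = s }. -/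
set_option linter.unusedSectionVars false
set_option maxHeartbeats 800000


open Matrix

namespace GreedyAux

variable {R : Type*} [Fintype R] [DecidableEq R]

/-- extension of a vector on `K` by zero -/
def extVec (K : Finset R) (x : ↥K → ℝ) : R → ℝ :=
  fun i => if h : i ∈ K then x ⟨i, h⟩ else 0

lemma extVec_not_mem {K : Finset R} (x : ↥K → ℝ) {i : R} (h : i ∉ K) : extVec K x i = 0 :=
  dif_neg h

lemma extVec_mem {K : Finset R} (x : ↥K → ℝ) {i : R} (h : i ∈ K) : extVec K x i = x ⟨i, h⟩ :=
  dif_pos h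

lemma sum_supported {K : Finset R} {Y : R → ℝ} (hY : ∀ j, j ∉ K → Y j = 0) (g : R → ℝ) :
    ∑ j : R, g j * Y j = ∑ j : ↥K, g j.1 * Y j.1 := by
  have h1 : ∑ j : R, g j * Y j = ∑ j ∈ K, g j * Y j :=
    (Finset.sum_subset K.subset_univ (fun x _ hx => by rw [hY x hx, mul_zero])).symm
  rw [h1, Finset.sum_subtype K (fun x => Iff.rfl) (fun j => g j * Y j)]

variable (C : Matrix R R ℝ)

lemma quad_pos (hC : C.PosDef) {v : R → ℝ} (hv : v ≠ 0) : 0 < v ⬝ᵥ (C *ᵥ v) := by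
  simpa using hC.dotProduct_mulVec_pos hv

lemma symm_apply (hC : C.PosDef) (a b : R) : C a b = C b a := by
  have := congrFun (congrFun hC.isHermitian.eq b) a
  simpa using this

lemma dot_mulVec_symm (hC : C.PosDef) (v w : R → ℝ) :
    (C *ᵥ v) ⬝ᵥ w = v ⬝ᵥ (C *ᵥ w) := by
  simp only [dotProduct, Matrix.mulVec, Finset.sum_mul, Finset.mul_sum]
  rw [Finset.sum_comm]
  refine Finset.sum_congr rfl fun a _ => Finset.sum_congr rfl fun b _ => ?_
  rw [symm_apply C hC a b]; ring

lemma mulVec_supported {K : Finset R} {Y : R → ℝ} (hY : ∀ j, j ∉ K → Y j = 0)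
    {i : R} (hi : i ∈ K) :
    (C *ᵥ Y) i = (C.principalSub K *ᵥ K.subVec Y) ⟨i, hi⟩ := by
  simp only [Matrix.mulVec, dotProduct, Matrix.principalSub, Finset.subVec,
    Matrix.submatrix_apply]
  exact sum_supported hY _

lemma principalSub_posDef (hC : C.PosDef) (K : Finset R) : (C.principalSub K).PosDef := by
  refine Matrix.PosDef.of_dotProduct_mulVec_pos ?_ ?_
  · exact hC.isHermitian.submatrix _
  · intro x hx
    have hY : ∀ j, j ∉ K → extVec K x j = 0 := fun j hj => extVec_not_mem x hj
    have hne : extVec K x ≠ 0 := by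
      intro h
      apply hx
      funext a
      have := congrFun h a.1
      rwa [extVec_mem x a.2, Subtype.coe_eta] at this
    have hpos := quad_pos C hC hne
    have hsub : K.subVec (extVec K x) = x := by
      funext b
      show extVec K x b.1 = x b
      rw [extVec_mem x b.2, Subtype.coe_eta]
    have key : extVec K x ⬝ᵥ (C *ᵥ extVec K x) = x ⬝ᵥ (C.principalSub K *ᵥ x) := by
      rw [dotProduct_comm, dotProduct, sum_supported hY, dotProduct_comm x, dotProduct]
      refine Finset.sum_congr rfl fun a _ => ?_
      rw [mulVec_supported C hY a.2, extVec_mem x a.2, Subtype.coe_eta, hsub]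
    simpa using key ▸ hpos

lemma principalSub_isUnit_det (hC : C.PosDef) (K : Finset R) :
    IsUnit (C.principalSub K).det :=
  (principalSub_posDef C hC K).det_pos.ne'.isUnit

/-- solve `C_KK x_K = w_K`, extended by zero -/
noncomputable def solveV (K : Finset R) (w : R → ℝ) : R → ℝ :=
  extVec K ((C.principalSub K)⁻¹.mulVec (K.subVec w))

lemma solveV_not_mem {K : Finset R} (w : R → ℝ) {i : R} (h : i ∉ K) : solveV C K w i = 0 :=
  dif_neg h

lemma mulVec_solveV (hC : C.PosDef) {K : Finset R} (w : R → ℝ) {i : R} (hi : i ∈ K) :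
    (C *ᵥ solveV C K w) i = w i := by
  have hY : ∀ j, j ∉ K → solveV C K w j = 0 := fun j hj => solveV_not_mem C w hj
  rw [mulVec_supported C hY hi]
  have hsub : K.subVec (solveV C K w) = (C.principalSub K)⁻¹.mulVec (K.subVec w) := by
    funext a
    show solveV C K w a.1 = _
    rw [solveV, extVec_mem _ a.2, Subtype.coe_eta]
  rw [hsub, Matrix.mulVec_mulVec, Matrix.mul_nonsing_inv _ (principalSub_isUnit_det C hC K),
    Matrix.one_mulVec]
  rfl

lemma solveV_unique (hC : C.PosDef) {K : Finset R} {w v : R → ℝ}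
    (hsupp : ∀ i, i ∉ K → v i = 0) (heq : ∀ k ∈ K, (C *ᵥ v) k = w k) :
    v = solveV C K w := by
  have hd : ∀ i, i ∉ K → (v - solveV C K w) i = 0 := by
    intro i hi
    simp [hsupp i hi, solveV_not_mem C w hi]
  have hCd : ∀ k ∈ K, (C *ᵥ (v - solveV C K w)) k = 0 := by
    intro k hk
    rw [Matrix.mulVec_sub]
    simp [heq k hk, mulVec_solveV C hC w hk]
  have hq : (v - solveV C K w) ⬝ᵥ (C *ᵥ (v - solveV C K w)) = 0 := by
    rw [dotProduct]
    refine Finset.sum_eq_zero fun a _ => ?_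
    by_cases ha : a ∈ K
    · rw [hCd a ha, mul_zero]
    · rw [hd a ha, zero_mul]
  by_contra hne
  have : v - solveV C K w ≠ 0 := sub_ne_zero_of_ne hne
  exact absurd hq (ne_of_gt (quad_pos C hC this))

noncomputable def bV : R → ℝ := C *ᵥ (fun _ => 1)
noncomputable def xKV (K : Finset R) : R → ℝ := solveV C K (bV C)
noncomputable def uV (K : Finset R) (i : R) : R → ℝ :=
  Pi.single i 1 - solveV C K (C *ᵥ Pi.single i 1)
noncomputable def sigV (K : Finset R) (i j : R) : ℝ := uV C K i ⬝ᵥ (C *ᵥ uV C K j)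
noncomputable def dV (K : Finset R) (i : R) : ℝ := bV C i - (C *ᵥ xKV C K) i
noncomputable def GV (K : Finset R) : ℝ := bV C ⬝ᵥ xKV C K

lemma uV_apply_self {K : Finset R} {i : R} (hi : i ∉ K) : uV C K i i = 1 := by
  simp [uV, solveV_not_mem C _ hi]

lemma uV_not_mem {K : Finset R} {i a : R} (ha : a ∉ insert i K) : uV C K i a = 0 := by
  have h1 : a ≠ i := fun h => ha (h ▸ Finset.mem_insert_self i K)
  have h2 : a ∉ K := fun h => ha (Finset.mem_insert_of_mem h)
  simp [uV, solveV_not_mem C _ h2, Pi.single_eq_of_ne h1]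

lemma mulVec_uV (hC : C.PosDef) {K : Finset R} (i : R) {k : R} (hk : k ∈ K) :
    (C *ᵥ uV C K i) k = 0 := by
  simp only [uV, Matrix.mulVec_sub, Pi.sub_apply, mulVec_solveV C hC _ hk, sub_self]

lemma uV_unique (hC : C.PosDef) {K : Finset R} {i : R} {w : R → ℝ}
    (hsupp : ∀ a, a ∉ insert i K → w a = 0) (hwi : w i = 1)
    (hK : ∀ k ∈ K, (C *ᵥ w) k = 0) : w = uV C K i := by
  have key : Pi.single i 1 - w = solveV C K (C *ᵥ Pi.single i 1) := by
    refine solveV_unique C hC (fun a ha => ?_) (fun k hk => ?_)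
    · by_cases hai : a = i
      · subst hai; simp [hwi]
      · have : a ∉ insert i K := by simp [hai, ha]
        simp [hsupp a this, Pi.single_eq_of_ne hai]
    · rw [Matrix.mulVec_sub, Pi.sub_apply, hK k hk, sub_zero]
  rw [uV, ← key]
  abel

lemma sigV_eq (hC : C.PosDef) {K : Finset R} {i : R} (hi : i ∉ K) (j : R) :
    sigV C K i j = (C *ᵥ uV C K j) i := by
  rw [sigV, dotProduct]
  rw [Finset.sum_eq_single i]
  · rw [uV_apply_self C hi, one_mul]
  · intro a _ hai
    by_cases haK : a ∈ K
    · rw [mulVec_uV C hC j haK, mul_zero]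
    · have : a ∉ insert i K := by simp [hai, haK]
      rw [uV_not_mem C this, zero_mul]
  · intro h; exact absurd (Finset.mem_univ i) h

lemma sigV_symm (hC : C.PosDef) (K : Finset R) (i j : R) :
    sigV C K i j = sigV C K j i := by
  rw [sigV, sigV, ← dot_mulVec_symm C hC, dotProduct_comm]

lemma sigV_pos (hC : C.PosDef) {K : Finset R} {i : R} (hi : i ∉ K) :
    0 < sigV C K i i := by
  refine quad_pos C hC fun h => ?_
  have := congrFun h i
  rw [uV_apply_self C hi] at this
  simpa using this

lemma sigV_nonneg (hC : C.PosDef) (hH : ∀ i j : R, i ≠ j → C⁻¹ i j ≤ 0)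
    {K : Finset R} {i j : R} (hi : i ∉ K) (hj : j ∉ K) :
    0 ≤ sigV C K i j := by
  have hdet : IsUnit C.det := hC.det_pos.ne'.isUnit
  set v : R → ℝ := C *ᵥ uV C K j with hv
  have hinv : C⁻¹ *ᵥ v = uV C K j := by
    rw [hv, Matrix.mulVec_mulVec, Matrix.nonsing_inv_mul C hdet, Matrix.one_mulVec]
  have hvK : ∀ k ∈ K, v k = 0 := fun k hk => mulVec_uV C hC j hk
  set vm : R → ℝ := fun a => max (-(v a)) 0 with hvmdef
  set vp : R → ℝ := fun a => max (v a) 0 with hvpdef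
  have hsplit : ∀ a, v a = vp a - vm a := by
    intro a
    simp only [hvmdef, hvpdef]
    rcases le_total (v a) 0 with h | h
    · rw [max_eq_left (neg_nonneg.mpr h), max_eq_right h]; ring
    · rw [max_eq_right (neg_nonpos.mpr h), max_eq_left h]; ring
  have hvm0 : vm = 0 := by
    by_contra hne
    have hQ : 0 < vm ⬝ᵥ (C⁻¹ *ᵥ vm) := quad_pos C⁻¹ hC.inv hne
    have hvmv : vm = vp - v := by funext a; simp [hsplit a]
    have hsplit2 : (C⁻¹ *ᵥ vm) = C⁻¹ *ᵥ vp - C⁻¹ *ᵥ v := by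
      rw [hvmv, Matrix.mulVec_sub]
    have t2 : vm ⬝ᵥ (C⁻¹ *ᵥ v) = vm j := by
      rw [hinv, dotProduct]
      rw [Finset.sum_eq_single j]
      · rw [uV_apply_self C hj, mul_one]
      · intro a _ haj
        by_cases haK : a ∈ K
        · have : vm a = 0 := by simp [hvmdef, hvK a haK]
          rw [this, zero_mul]
        · have : a ∉ insert j K := by simp [haj, haK]
          rw [uV_not_mem C this, mul_zero]
      · intro h; exact absurd (Finset.mem_univ j) h
    have t1 : vm ⬝ᵥ (C⁻¹ *ᵥ vp) ≤ 0 := by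
      rw [dotProduct]
      refine Finset.sum_nonpos fun a _ => ?_
      rw [Matrix.mulVec, dotProduct, Finset.mul_sum]
      refine Finset.sum_nonpos fun b _ => ?_
      by_cases hab : a = b
      · subst hab
        rcases le_total (v a) 0 with h | h
        · have : vp a = 0 := by simp [hvpdef, h]
          simp [this]
        · have : vm a = 0 := by simp [hvmdef, h]
          simp [this]
      · have h1 : 0 ≤ vm a := le_max_right _ _
        have h2 : 0 ≤ vp b := le_max_right _ _
        have h3 : C⁻¹ a b ≤ 0 := hH a b hab
        have h4 : 0 ≤ vm a * vp b := mul_nonneg h1 h2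
        nlinarith [mul_nonneg h1 h2, mul_nonpos_iff.mpr (Or.inr ⟨h3, h4⟩)]
    have hvmj : 0 ≤ vm j := le_max_right _ _
    have : vm ⬝ᵥ (C⁻¹ *ᵥ vm) ≤ 0 := by
      rw [hsplit2, dotProduct_sub, t2]
      linarith
    linarith
  have hvnn : 0 ≤ v i := by
    have := hsplit i
    have h0 : vm i = 0 := congrFun hvm0 i
    have h2 : 0 ≤ vp i := le_max_right _ _
    rw [h0, sub_zero] at this
    linarith
  rw [sigV_eq C hC hi j]
  exact hvnn

lemma xKV_compl (hC : C.PosDef) (K : Finset R) :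
    xKV C K = (fun _ => 1) - ∑ j ∈ Kᶜ, uV C K j := by
  rw [xKV]
  refine (solveV_unique C hC (fun a ha => ?_) (fun k hk => ?_)).symm
  · have haC : a ∈ Kᶜ := Finset.mem_compl.mpr ha
    have hsum : (∑ j ∈ Kᶜ, uV C K j) a = 1 := by
      rw [Finset.sum_apply]
      rw [Finset.sum_eq_single a]
      · exact uV_apply_self C ha
      · intro b hb hba
        have : a ∉ insert b K := by
          simp only [Finset.mem_insert, not_or]
          exact ⟨fun h => hba h.symm, ha⟩
        exact uV_not_mem C this
      · intro h; exact absurd haC h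
    simp [hsum]
  · have hCsum : (C *ᵥ ∑ j ∈ Kᶜ, uV C K j) k = 0 := by
      have : C *ᵥ (∑ j ∈ Kᶜ, uV C K j) = ∑ j ∈ Kᶜ, C *ᵥ uV C K j := by
        rw [← Matrix.mulVecLin_apply, map_sum]
        simp [Matrix.mulVecLin_apply]
      rw [this, Finset.sum_apply]
      exact Finset.sum_eq_zero fun j _ => mulVec_uV C hC j hk
    rw [Matrix.mulVec_sub, Pi.sub_apply, hCsum, sub_zero, bV]

lemma dV_eq_sum (hC : C.PosDef) {K : Finset R} {i : R} (hi : i ∉ K) :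
    dV C K i = ∑ j ∈ Kᶜ, sigV C K i j := by
  rw [dV, xKV_compl C hC K, Matrix.mulVec_sub, Pi.sub_apply]
  have h1 : (C *ᵥ fun _ => 1) i = bV C i := rfl
  have h2 : C *ᵥ (∑ j ∈ Kᶜ, uV C K j) = ∑ j ∈ Kᶜ, C *ᵥ uV C K j := by
    rw [← Matrix.mulVecLin_apply, map_sum]
    simp [Matrix.mulVecLin_apply]
  rw [h1, h2, Finset.sum_apply]
  rw [sub_sub_cancel]
  exact Finset.sum_congr rfl fun j _ => (sigV_eq C hC hi j).symm

lemma dV_nonneg (hC : C.PosDef) (hH : ∀ i j : R, i ≠ j → C⁻¹ i j ≤ 0)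
    {K : Finset R} {i : R} (hi : i ∉ K) : 0 ≤ dV C K i := by
  rw [dV_eq_sum C hC hi]
  exact Finset.sum_nonneg fun j hj => sigV_nonneg C hC hH hi (Finset.mem_compl.mp hj)

lemma bV_dot_uV (hC : C.PosDef) {K : Finset R} {i : R} (hi : i ∉ K) :
    bV C ⬝ᵥ uV C K i = dV C K i := by
  have h1 : bV C ⬝ᵥ uV C K i = (fun _ => (1:ℝ)) ⬝ᵥ (C *ᵥ uV C K i) := by
    rw [bV, dot_mulVec_symm C hC]
  rw [h1, dotProduct, dV_eq_sum C hC hi]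
  have h2 : ∑ k : R, 1 * (C *ᵥ uV C K i) k = ∑ k ∈ Kᶜ, (C *ᵥ uV C K i) k := by
    simp only [one_mul]
    refine (Finset.sum_subset (Finset.subset_univ Kᶜ) fun x _ hx => ?_).symm
    have : x ∈ K := by simpa using hx
    exact mulVec_uV C hC i this
  rw [h2]
  refine Finset.sum_congr rfl fun k hk => ?_
  rw [← sigV_eq C hC (Finset.mem_compl.mp hk) i, sigV_symm C hC]

lemma xKV_insert (hC : C.PosDef) {K : Finset R} {i : R} (hi : i ∉ K) :
    xKV C (insert i K) = xKV C K + (dV C K i / sigV C K i i) • uV C K i := by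
  rw [xKV]
  refine (solveV_unique C hC (fun a ha => ?_) (fun k hk => ?_)).symm
  · have haK : a ∉ K := fun h => ha (Finset.mem_insert_of_mem h)
    have hxa : xKV C K a = 0 := solveV_not_mem C _ haK
    have hua : uV C K i a = 0 := uV_not_mem C (by
      intro h
      rcases Finset.mem_insert.mp h with h | h
      · exact ha (h ▸ Finset.mem_insert_self i K)
      · exact haK h)
    simp [hxa, hua]
  · rw [Matrix.mulVec_add, Matrix.mulVec_smul, Pi.add_apply, Pi.smul_apply, smul_eq_mul]
    rcases Finset.mem_insert.mp hk with h | h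
    · subst h
      have h1 : (C *ᵥ uV C K k) k = sigV C K k k := (sigV_eq C hC hi k).symm
      have h2 : (C *ᵥ xKV C K) k = bV C k - dV C K k := by rw [dV]; ring
      rw [h1, h2, div_mul_cancel₀ _ (sigV_pos C hC hi).ne']
      ring
    · rw [mulVec_uV C hC i h, mul_zero, add_zero, xKV, mulVec_solveV C hC _ h]

lemma gain_eq (hC : C.PosDef) {K : Finset R} {i : R} (hi : i ∉ K) :
    GV C (insert i K) = GV C K + (dV C K i)^2 / sigV C K i i := by
  rw [GV, GV, xKV_insert C hC hi, dotProduct_add, dotProduct_smul, smul_eq_mul,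
    bV_dot_uV C hC hi]
  ring

lemma uV_insert (hC : C.PosDef) {K : Finset R} {i j : R} (hj : j ∉ K)
    (hi : i ∉ insert j K) :
    uV C (insert j K) i = uV C K i - (sigV C K i j / sigV C K j j) • uV C K j := by
  have hiK : i ∉ K := fun h => hi (Finset.mem_insert_of_mem h)
  have hij : i ≠ j := fun h => hi (h ▸ Finset.mem_insert_self j K)
  refine (uV_unique C hC (fun a ha => ?_) ?_ (fun k hk => ?_)).symm
  · have haiK : a ∉ insert i K := by
      simp only [Finset.mem_insert, not_or] at ha ⊢
      exact ⟨ha.1, ha.2.2⟩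
    have hajK : a ∉ insert j K := by
      simp only [Finset.mem_insert, not_or] at ha ⊢
      exact ⟨ha.2.1, ha.2.2⟩
    simp [uV_not_mem C haiK, uV_not_mem C hajK]
  · have h1 : uV C K i i = 1 := uV_apply_self C hiK
    have h2 : uV C K j i = 0 := uV_not_mem C (by
      simp only [Finset.mem_insert, not_or]; exact ⟨hij, hiK⟩)
    simp [h1, h2]
  · rw [Matrix.mulVec_sub, Matrix.mulVec_smul, Pi.sub_apply, Pi.smul_apply, smul_eq_mul]
    rcases Finset.mem_insert.mp hk with h | h
    · rw [h, ← sigV_eq C hC hj i, ← sigV_eq C hC hj j,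
        div_mul_cancel₀ _ (sigV_pos C hC hj).ne', sigV_symm C hC, sub_self]
    · rw [mulVec_uV C hC i h, mulVec_uV C hC j h, mul_zero, sub_zero]

lemma sigV_insert (hC : C.PosDef) {K : Finset R} {i j : R} (hj : j ∉ K)
    (hi : i ∉ insert j K) :
    sigV C (insert j K) i i = sigV C K i i - (sigV C K i j)^2 / sigV C K j j := by
  have hiK : i ∉ K := fun h => hi (Finset.mem_insert_of_mem h)
  rw [sigV_eq C hC hi i, uV_insert C hC hj hi, Matrix.mulVec_sub, Matrix.mulVec_smul,
    Pi.sub_apply, Pi.smul_apply, smul_eq_mul, ← sigV_eq C hC hiK i, ← sigV_eq C hC hiK j]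
  ring

lemma dV_insert (hC : C.PosDef) {K : Finset R} {i j : R} (hj : j ∉ K)
    (hi : i ∉ insert j K) :
    dV C (insert j K) i = dV C K i - sigV C K i j / sigV C K j j * dV C K j := by
  have hiK : i ∉ K := fun h => hi (Finset.mem_insert_of_mem h)
  rw [dV, dV, xKV_insert C hC hj, Matrix.mulVec_add, Matrix.mulVec_smul, Pi.add_apply,
    Pi.smul_apply, smul_eq_mul, ← sigV_eq C hC hiK j]
  ring

lemma gain_nonneg (hC : C.PosDef) {K : Finset R} {i : R} (hi : i ∉ K) :
    GV C K ≤ GV C (insert i K) := by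
  rw [gain_eq C hC hi]
  have := sigV_pos C hC hi
  nlinarith [sq_nonneg (dV C K i), div_nonneg (sq_nonneg (dV C K i)) this.le]

lemma GV_union_le (hC : C.PosDef) (K : Finset R) : ∀ D : Finset R, GV C K ≤ GV C (K ∪ D) := by
  intro D
  classical
  induction D using Finset.induction_on with
  | empty => rw [Finset.union_empty]
  | @insert a D' _ ih =>
    rw [Finset.union_insert]
    by_cases haKD : a ∈ K ∪ D'
    · rwa [Finset.insert_eq_self.mpr haKD]
    · exact le_trans ih (gain_nonneg C hC haKD)

lemma GV_mono (hC : C.PosDef) {K L : Finset R} (h : K ⊆ L) : GV C K ≤ GV C L := by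
  have := GV_union_le C hC K (L \ K)
  rwa [Finset.union_sdiff_of_subset h] at this

lemma local_submod (hC : C.PosDef) (hH : ∀ i j : R, i ≠ j → C⁻¹ i j ≤ 0)
    {K : Finset R} {i j : R} (hi : i ∉ K) (hj : j ∉ K) (hij : i ≠ j) :
    GV C (insert i (insert j K)) - GV C (insert j K) ≤ GV C (insert i K) - GV C K := by
  have hijK : i ∉ insert j K := by
    simp only [Finset.mem_insert, not_or]; exact ⟨hij, hi⟩
  have hjiK : j ∉ insert i K := by
    simp only [Finset.mem_insert, not_or]; exact ⟨fun h => hij h.symm, hj⟩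
  rw [gain_eq C hC hijK, gain_eq C hC hi]
  have ha : 0 < sigV C K i i := sigV_pos C hC hi
  have hb : 0 < sigV C K j j := sigV_pos C hC hj
  have hr : 0 ≤ sigV C K i j := sigV_nonneg C hC hH hi hj
  have hci : 0 ≤ dV C K i := dV_nonneg C hC hH hi
  have hcj : 0 ≤ dV C K j := dV_nonneg C hC hH hj
  have hS' : 0 < sigV C (insert j K) i i := sigV_pos C hC hijK
  have hd1 : 0 ≤ dV C (insert j K) i := dV_nonneg C hC hH hijK
  have hd2 : 0 ≤ dV C (insert i K) j := dV_nonneg C hC hH hjiK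
  rw [dV_insert C hC hj hijK] at hd1
  rw [dV_insert C hC hi hjiK] at hd2
  rw [sigV_symm C hC K j i] at hd2
  set a := sigV C K i i
  set B := sigV C K j j
  set r := sigV C K i j
  set ci := dV C K i
  set cj := dV C K j
  have e1 : r * cj ≤ B * ci := by
    have hmul : 0 ≤ (ci - r / B * cj) * B := mul_nonneg hd1 hb.le
    have hcalc : (ci - r / B * cj) * B = ci * B - r * cj := by field_simp
    nlinarith [hcalc ▸ hmul]
  have e2 : r * ci ≤ a * cj := by
    have hmul : 0 ≤ (cj - r / a * ci) * a := mul_nonneg hd2 ha.le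
    have hcalc : (cj - r / a * ci) * a = cj * a - r * ci := by field_simp
    nlinarith [hcalc ▸ hmul]
  have hSeq : sigV C (insert j K) i i = a - r^2 / B := sigV_insert C hC hj hijK
  have hdeq : dV C (insert j K) i = ci - r / B * cj := dV_insert C hC hj hijK
  rw [hSeq] at hS'
  rw [hSeq, hdeq]
  have key : a * (B * ci - r * cj)^2 ≤ ci^2 * (a * B - r^2) * B := by
    nlinarith [mul_le_mul_of_nonneg_left e1 (mul_nonneg (mul_nonneg ha.le hr) hcj),
      mul_le_mul_of_nonneg_left e2 (mul_nonneg (mul_nonneg hb.le hr) hci)]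
  have goal2 : (ci - r / B * cj)^2 / (a - r^2/B) ≤ ci^2 / a := by
    rw [div_le_div_iff₀ hS' ha]
    have hBB : (0:ℝ) < B^2 := by positivity
    rw [← mul_le_mul_iff_of_pos_right hBB]
    have lhs_eq : (ci - r / B * cj)^2 * a * B^2 = a * (B * ci - r * cj)^2 := by
      field_simp
    have rhs_eq : ci^2 * (a - r^2/B) * B^2 = ci^2 * (a * B - r^2) * B := by
      field_simp
    rw [lhs_eq, rhs_eq]
    exact key
  linarith

lemma gain_mono (hC : C.PosDef) (hH : ∀ i j : R, i ≠ j → C⁻¹ i j ≤ 0)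
    {K K' : Finset R} (hKK : K ⊆ K') {i : R} (hi : i ∉ K') :
    GV C (insert i K') - GV C K' ≤ GV C (insert i K) - GV C K := by
  classical
  have aux : ∀ D : Finset R, i ∉ K ∪ D →
      GV C (insert i (K ∪ D)) - GV C (K ∪ D) ≤ GV C (insert i K) - GV C K := by
    intro D
    induction D using Finset.induction_on with
    | empty => intro _; rw [Finset.union_empty]
    | @insert a D' _ ih =>
      intro hiD
      rw [Finset.union_insert]
      by_cases haKD : a ∈ K ∪ D'
      · rw [Finset.insert_eq_self.mpr haKD]
        exact ih (by rw [Finset.union_insert] at hiD; exact fun h => hiD (Finset.mem_insert_of_mem h))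
      · have hiKD : i ∉ K ∪ D' := by
          rw [Finset.union_insert] at hiD
          exact fun h => hiD (Finset.mem_insert_of_mem h)
        have hia : i ≠ a := by
          rw [Finset.union_insert] at hiD
          exact fun h => hiD (by rw [h]; exact Finset.mem_insert_self a _)
        calc GV C (insert i (insert a (K ∪ D'))) - GV C (insert a (K ∪ D'))
            ≤ GV C (insert i (K ∪ D')) - GV C (K ∪ D') :=
              local_submod C hC hH hiKD haKD hia
          _ ≤ GV C (insert i K) - GV C K := ih hiKD
  have h1 := aux (K' \ K) (by rwa [Finset.union_sdiff_of_subset hKK])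
  rwa [Finset.union_sdiff_of_subset hKK] at h1

lemma subadd (hC : C.PosDef) (hH : ∀ i j : R, i ≠ j → C⁻¹ i j ≤ 0)
    (L K : Finset R) :
    GV C (K ∪ L) ≤ GV C K + ∑ j ∈ L \ K, (GV C (insert j K) - GV C K) := by
  classical
  induction L using Finset.induction_on with
  | empty => simp
  | @insert a L' ha ih =>
    rw [Finset.union_insert]
    by_cases haK : a ∈ K
    · rw [Finset.insert_eq_self.mpr (Finset.mem_union_left L' haK),
        Finset.insert_sdiff_of_mem L' haK]
      exact ih
    · have haKL : a ∉ K ∪ L' := by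
        simp only [Finset.mem_union, not_or]; exact ⟨haK, ha⟩
      have step : GV C (insert a (K ∪ L')) ≤ GV C (K ∪ L') + (GV C (insert a K) - GV C K) := by
        have := gain_mono C hC hH (Finset.subset_union_left (s₂ := L')) haKL
        linarith
      have hsd : (insert a L') \ K = insert a (L' \ K) := by
        rw [Finset.insert_sdiff_of_notMem L' haK]
      have hanotin : a ∉ L' \ K := fun h => ha (Finset.mem_sdiff.mp h).1
      rw [hsd, Finset.sum_insert hanotin]
      linarith

lemma GV_empty : GV C ∅ = 0 := by
  have : xKV C ∅ = 0 := by
    funext a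
    exact solveV_not_mem C _ (Finset.notMem_empty a)
  rw [GV, this, dotProduct_zero]

lemma GV_eq (hC : C.PosDef) (K : Finset R) :
    GV C K = Finset.subVec (bV C) K ⬝ᵥ (C.principalSub K)⁻¹.mulVec (Finset.subVec (bV C) K) := by
  have hY : ∀ j, j ∉ K → xKV C K j = 0 := fun j hj => solveV_not_mem C _ hj
  calc GV C K = ∑ j : R, bV C j * xKV C K j := rfl
    _ = ∑ a : ↥K, bV C a.1 * xKV C K a.1 := sum_supported hY _
    _ = ∑ a : ↥K, Finset.subVec (bV C) K a *
          ((C.principalSub K)⁻¹.mulVec (K.subVec (bV C))) a := by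
        refine Finset.sum_congr rfl fun a _ => ?_
        have hx : xKV C K a.1 = ((C.principalSub K)⁻¹.mulVec (K.subVec (bV C))) a := by
          rw [xKV, solveV, extVec_mem _ a.2, Subtype.coe_eta]
        rw [hx]; rfl
    _ = _ := rfl

end GreedyAux


/-- For `C` symmetric positive definite with `C⁻¹` having nonpositive
off-diagonal entries, the greedy algorithm applied to the variance reduction
`F(K) = (C 1)_Kᵀ (C_{KK})⁻¹ (C 1)_K` (with `F(∅) = 0`, realized as an empty sum)
yields after `s` steps a set `K_s` with `F(K_s) ≥ (1 − 1/e) · max { F(K) : |K| = s }`. -/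
theorem greedy_variance_reduction_guarantee
    {R : Type*} [Fintype R] [DecidableEq R]
    (C : Matrix R R ℝ) (hC : C.PosDef)
    (hCinv_offdiag : ∀ i j : R, i ≠ j → C⁻¹ i j ≤ 0)
    (F : Finset R → ℝ)
    (hF : ∀ K : Finset R,
      F K = Finset.subVec (C.mulVec fun _ => 1) K ⬝ᵥ
              (C.principalSub K)⁻¹.mulVec (Finset.subVec (C.mulVec fun _ => 1) K))
    (s : ℕ) (hs1 : 1 ≤ s) (hs2 : s ≤ Fintype.card R)
    (Kgreedy : ℕ → Finset R) (hK0 : Kgreedy 0 = ∅)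
    (hgreedy : ∀ t : ℕ, t < s → ∃ i : R, i ∉ Kgreedy t ∧
      Kgreedy (t + 1) = insert i (Kgreedy t) ∧
      ∀ j : R, j ∉ Kgreedy t → F (insert j (Kgreedy t)) ≤ F (insert i (Kgreedy t))) :
    ∀ K : Finset R, K.card = s →
      (1 - 1 / Real.exp 1) * F K ≤ F (Kgreedy s) := by
  intro K hK
  have hFG : ∀ L : Finset R, F L = GreedyAux.GV C L := by
    intro L
    rw [hF L, GreedyAux.GV_eq C hC L]
    rfl
  have hs' : (0:ℝ) < (s:ℝ) := by exact_mod_cast Nat.lt_of_lt_of_le Nat.zero_lt_one hs1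
  have hq0 : 0 ≤ 1 - 1/(s:ℝ) := by
    have h1 : 1/(s:ℝ) ≤ 1 := by
      rw [div_le_one hs']; exact_mod_cast hs1
    linarith
  have hO : 0 ≤ GreedyAux.GV C K := by
    have := GreedyAux.GV_mono C hC (Finset.empty_subset K)
    rwa [GreedyAux.GV_empty] at this
  have main : ∀ t, t ≤ s → GreedyAux.GV C K - GreedyAux.GV C (Kgreedy t) ≤
      (1 - 1/(s:ℝ))^t * GreedyAux.GV C K := by
    intro t
    induction t with
    | zero =>
      intro _
      rw [hK0, GreedyAux.GV_empty, pow_zero, one_mul, sub_zero]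
    | succ t ih =>
      intro ht1
      have ht : t < s := ht1
      obtain ⟨i, hiK, hKt1, hmax⟩ := hgreedy t ht
      have key : GreedyAux.GV C K ≤ GreedyAux.GV C (Kgreedy t) +
          (s:ℝ) * (GreedyAux.GV C (Kgreedy (t+1)) - GreedyAux.GV C (Kgreedy t)) := by
        set g := GreedyAux.GV C (insert i (Kgreedy t)) - GreedyAux.GV C (Kgreedy t) with hg
        have h1 : GreedyAux.GV C K ≤ GreedyAux.GV C (Kgreedy t ∪ K) :=
          GreedyAux.GV_mono C hC Finset.subset_union_right
        have h2 := GreedyAux.subadd C hC hCinv_offdiag K (Kgreedy t)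
        have h3 : ∑ j ∈ K \ Kgreedy t,
            (GreedyAux.GV C (insert j (Kgreedy t)) - GreedyAux.GV C (Kgreedy t)) ≤
            (K \ Kgreedy t).card • g := by
          refine Finset.sum_le_card_nsmul _ _ _ fun j hj => ?_
          have hjn : j ∉ Kgreedy t := (Finset.mem_sdiff.mp hj).2
          have := hmax j hjn
          rw [hFG, hFG] at this
          rw [hg]
          linarith
        have hgn : 0 ≤ g := by
          have := GreedyAux.gain_nonneg C hC hiK
          rw [hg]; linarith
        have h4 : ((K \ Kgreedy t).card : ℝ) * g ≤ (s:ℝ) * g := by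
          apply mul_le_mul_of_nonneg_right _ hgn
          have hcard : (K \ Kgreedy t).card ≤ s := hK ▸ Finset.card_le_card Finset.sdiff_subset
          exact_mod_cast hcard
        rw [nsmul_eq_mul] at h3
        rw [hKt1]
        calc GreedyAux.GV C K ≤ GreedyAux.GV C (Kgreedy t ∪ K) := h1
          _ ≤ _ := h2
          _ ≤ GreedyAux.GV C (Kgreedy t) + (s:ℝ) * g := by linarith
      have hdiv : (GreedyAux.GV C K - GreedyAux.GV C (Kgreedy t)) / (s:ℝ) ≤
          GreedyAux.GV C (Kgreedy (t+1)) - GreedyAux.GV C (Kgreedy t) := by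
        rw [div_le_iff₀ hs']
        nlinarith [key]
      have hexp : (1 - 1/(s:ℝ)) * (GreedyAux.GV C K - GreedyAux.GV C (Kgreedy t)) =
          (GreedyAux.GV C K - GreedyAux.GV C (Kgreedy t)) -
          (GreedyAux.GV C K - GreedyAux.GV C (Kgreedy t))/(s:ℝ) := by
        ring
      have step : GreedyAux.GV C K - GreedyAux.GV C (Kgreedy (t+1)) ≤
          (1 - 1/(s:ℝ)) * (GreedyAux.GV C K - GreedyAux.GV C (Kgreedy t)) := by
        rw [hexp]; linarith
      have ihh := ih (le_of_lt ht)
      calc GreedyAux.GV C K - GreedyAux.GV C (Kgreedy (t+1)) ≤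
          (1 - 1/(s:ℝ)) * (GreedyAux.GV C K - GreedyAux.GV C (Kgreedy t)) := step
        _ ≤ (1 - 1/(s:ℝ)) * ((1 - 1/(s:ℝ))^t * GreedyAux.GV C K) :=
            mul_le_mul_of_nonneg_left ihh hq0
        _ = (1 - 1/(s:ℝ))^(t+1) * GreedyAux.GV C K := by ring
  have hfinal := main s le_rfl
  have hpow : (1 - 1/(s:ℝ))^s ≤ 1/Real.exp 1 := by
    have h1 : 1 - 1/(s:ℝ) ≤ Real.exp (-(1/(s:ℝ))) := by
      have := Real.add_one_le_exp (-(1/(s:ℝ)))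
      linarith
    calc (1 - 1/(s:ℝ))^s ≤ (Real.exp (-(1/(s:ℝ))))^s := pow_le_pow_left₀ hq0 h1 s
      _ = Real.exp ((s:ℝ) * -(1/(s:ℝ))) := by rw [← Real.exp_nat_mul]
      _ = Real.exp (-1) := by
          congr 1
          field_simp
      _ = 1/Real.exp 1 := by rw [Real.exp_neg, one_div]
  have hlast : GreedyAux.GV C K - GreedyAux.GV C (Kgreedy s) ≤
      (1/Real.exp 1) * GreedyAux.GV C K :=
    le_trans hfinal (mul_le_mul_of_nonneg_right hpow hO)
  have hE : (1 - 1/Real.exp 1) * GreedyAux.GV C K =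
      GreedyAux.GV C K - (1/Real.exp 1) * GreedyAux.GV C K := by ring
  rw [hFG, hFG, hE]
  linarith
end
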